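/- arXiv:1301.4375 — 5 statements merged into one kernel-verified Lean document; each statement's English description precedes it below -/
import Mathlib

section
/- Let f ∈ D_α, f ≠ 0, and suppose the optimal approximant p_n of order n to 1/f satisfies p_n(0) = 0. Then p_n is identically zero, i.e. the minimizer of ‖pf−1‖²_α over Poly_n with α < 2 can only vanish at the origin if it is the zero polynomial. -/
noncomputable def Dnorm2 (α : ℝ) (a : ℕ → ℂ) : ℝ :=
  ∑' k : ℕ, ((k : ℝ) + 1) ^ α * ‖a k‖ ^ 2

def InD (α : ℝ) (a : ℕ → ℂ) : Prop :=
  Summable fun k : ℕ => ((k : ℝ) + 1) ^ α * ‖a k‖ ^ 2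

noncomputable def polyMul (p : Polynomial ℂ) (a : ℕ → ℂ) : ℕ → ℂ :=
  fun k => ∑ i ∈ Finset.range (k + 1), p.coeff i * a (k - i)

def oneSeq : ℕ → ℂ := fun k => if k = 0 then 1 else 0

def IsOptimalApprox (α : ℝ) (n : ℕ) (f : ℕ → ℂ) (p : Polynomial ℂ) : Prop :=
  p.natDegree ≤ n ∧ ∀ q : Polynomial ℂ, q.natDegree ≤ n →
    Dnorm2 α (polyMul p f - oneSeq) ≤ Dnorm2 α (polyMul q f - oneSeq)

lemma InD.congr' {α : ℝ} {a b : ℕ → ℂ} (h : InD α a) (hab : ∀ k, b k = a k) : InD α b := by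
  unfold InD at *
  exact h.congr fun k => by rw [hab]

lemma InD.add {α : ℝ} {a b : ℕ → ℂ} (ha : InD α a) (hb : InD α b) :
    InD α (fun k => a k + b k) := by
  unfold InD at *
  apply Summable.of_nonneg_of_le (f := fun k : ℕ => 2 * (((k:ℝ)+1) ^ α * ‖a k‖ ^ 2)
      + 2 * (((k:ℝ)+1) ^ α * ‖b k‖ ^ 2))
  · intro k
    positivity
  · intro k
    have h1 : ‖a k + b k‖ ≤ ‖a k‖ + ‖b k‖ := norm_add_le _ _
    have h1' : ‖a k + b k‖ ^ 2 ≤ (‖a k‖ + ‖b k‖) ^ 2 :=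
      pow_le_pow_left₀ (norm_nonneg _) h1 2
    have h2 : ‖a k + b k‖ ^ 2 ≤ 2 * ‖a k‖ ^ 2 + 2 * ‖b k‖ ^ 2 := by
      nlinarith [sq_nonneg (‖a k‖ - ‖b k‖)]
    have h3 : (0:ℝ) ≤ ((k:ℝ)+1) ^ α := Real.rpow_nonneg (by positivity) _
    nlinarith
  · exact (ha.mul_left 2).add (hb.mul_left 2)

lemma InD.const_mul {α : ℝ} (c : ℂ) {a : ℕ → ℂ} (h : InD α a) :
    InD α (fun k => c * a k) := by
  unfold InD at *
  exact (h.mul_left (‖c‖ ^ 2)).congr fun k => by rw [norm_mul, mul_pow]; ring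

lemma InD.shift {α : ℝ} (i : ℕ) {a : ℕ → ℂ} (h : InD α a) :
    InD α (fun k => if i ≤ k then a (k - i) else 0) := by
  unfold InD at *
  rw [← summable_nat_add_iff i]
  have key : ∀ n : ℕ, ((((n + i : ℕ)):ℝ) + 1) ^ α * ‖if i ≤ n + i then a (n + i - i) else 0‖ ^ 2
      = (((n:ℝ) + (i:ℝ)) + 1) ^ α * ‖a n‖ ^ 2 := by
    intro n
    rw [if_pos (Nat.le_add_left i n), Nat.add_sub_cancel]
    push_cast
    ring_nf
  set C : ℝ := max (((i:ℝ) + 1) ^ α) 1 with hC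
  apply Summable.of_nonneg_of_le (f := fun n : ℕ => C * (((n:ℝ)+1) ^ α * ‖a n‖ ^ 2))
  · intro n
    rw [key]
    positivity
  · intro n
    rw [key]
    have hbase : (((n:ℝ) + (i:ℝ)) + 1) ^ α ≤ C * ((n:ℝ)+1) ^ α := by
      rcases le_or_gt 0 α with hα | hα
      · have h1 : ((n:ℝ) + (i:ℝ)) + 1 ≤ ((i:ℝ) + 1) * ((n:ℝ) + 1) := by
          have : (0:ℝ) ≤ (n:ℝ) := Nat.cast_nonneg n
          have : (0:ℝ) ≤ (i:ℝ) := Nat.cast_nonneg i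
          nlinarith
        calc (((n:ℝ) + (i:ℝ)) + 1) ^ α ≤ (((i:ℝ) + 1) * ((n:ℝ) + 1)) ^ α :=
              Real.rpow_le_rpow (by positivity) h1 hα
          _ = ((i:ℝ) + 1) ^ α * ((n:ℝ) + 1) ^ α :=
              Real.mul_rpow (by positivity) (by positivity)
          _ ≤ C * ((n:ℝ) + 1) ^ α := by
              apply mul_le_mul_of_nonneg_right (le_max_left _ _)
              exact Real.rpow_nonneg (by positivity) _
      · calc (((n:ℝ) + (i:ℝ)) + 1) ^ α ≤ ((n:ℝ) + 1) ^ α := by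
              apply Real.rpow_le_rpow_of_nonpos (by positivity) _ hα.le
              have : (0:ℝ) ≤ (i:ℝ) := Nat.cast_nonneg i
              linarith
          _ = 1 * ((n:ℝ) + 1) ^ α := by ring
          _ ≤ C * ((n:ℝ) + 1) ^ α := by
              apply mul_le_mul_of_nonneg_right (le_max_right _ _)
              exact Real.rpow_nonneg (by positivity) _
    have hnn : (0:ℝ) ≤ ‖a n‖ ^ 2 := by positivity
    calc (((n:ℝ) + (i:ℝ)) + 1) ^ α * ‖a n‖ ^ 2 ≤ (C * ((n:ℝ)+1) ^ α) * ‖a n‖ ^ 2 :=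
          mul_le_mul_of_nonneg_right hbase hnn
      _ = C * (((n:ℝ)+1) ^ α * ‖a n‖ ^ 2) := by ring
  · exact h.mul_left C

lemma InD_zero (α : ℝ) : InD α (fun _ => (0:ℂ)) := by
  unfold InD
  exact summable_zero.congr fun k => by simp

lemma InD_finsetSum {α : ℝ} {ι : Type*} (s : Finset ι) (F : ι → ℕ → ℂ)
    (h : ∀ i ∈ s, InD α (F i)) : InD α (fun k => ∑ i ∈ s, F i k) := by
  classical
  induction s using Finset.induction_on with
  | empty => exact (InD_zero α).congr' fun k => by simp
  | insert x s' hx ih =>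
    have := ((h x (Finset.mem_insert_self x s')).add
      (ih fun i hi => h i (Finset.mem_insert_of_mem hi)))
    exact this.congr' fun k => by rw [Finset.sum_insert hx]

lemma polyMul_eq (p : Polynomial ℂ) (f : ℕ → ℂ) (k : ℕ) :
    polyMul p f k = ∑ i ∈ Finset.range (p.natDegree + 1),
      p.coeff i * (if i ≤ k then f (k - i) else 0) := by
  classical
  unfold polyMul
  set M := max (p.natDegree + 1) (k + 1) with hM
  have h1 : ∑ i ∈ Finset.range (k + 1), p.coeff i * f (k - i)
      = ∑ i ∈ Finset.range M, p.coeff i * (if i ≤ k then f (k - i) else 0) := by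
    have h1a : ∑ i ∈ Finset.range (k + 1), p.coeff i * f (k - i)
        = ∑ i ∈ Finset.range (k + 1), p.coeff i * (if i ≤ k then f (k - i) else 0) := by
      apply Finset.sum_congr rfl
      intro i hi
      rw [Finset.mem_range] at hi
      rw [if_pos (Nat.lt_succ_iff.mp hi)]
    rw [h1a]
    apply Finset.sum_subset (Finset.range_subset_range.mpr (le_max_right _ _))
    intro i _ hi
    rw [Finset.mem_range, not_lt] at hi
    rw [if_neg (by omega)]
    ring
  have h2 : ∑ i ∈ Finset.range (p.natDegree + 1), p.coeff i * (if i ≤ k then f (k - i) else 0)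
      = ∑ i ∈ Finset.range M, p.coeff i * (if i ≤ k then f (k - i) else 0) := by
    rw [Finset.sum_subset (Finset.range_subset_range.mpr (le_max_left _ _))]
    intro i _ hi
    rw [Finset.mem_range, not_lt] at hi
    rw [p.coeff_eq_zero_of_natDegree_lt (by omega)]
    ring
  rw [h1, h2]

lemma InD_polyMul {α : ℝ} (p : Polynomial ℂ) {f : ℕ → ℂ} (hf : InD α f) :
    InD α (polyMul p f) := by
  have := InD_finsetSum (Finset.range (p.natDegree + 1))
    (fun i k => p.coeff i * (if i ≤ k then f (k - i) else 0))
    (fun i _ => (hf.shift i).const_mul (p.coeff i))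
  exact this.congr' fun k => polyMul_eq p f k

/-- if the optimal approximant p_n of order n to 1/f (α < 2) vanishes at the
origin, then it is identically zero. -/
theorem stmt4 (α : ℝ) (hα : α < 2) (n : ℕ) (f : ℕ → ℂ) (hf : InD α f) (hf0 : f ≠ 0)
    (p : Polynomial ℂ) (hp : IsOptimalApprox α n f p) (h0 : p.coeff 0 = 0) :
    p = 0 := by
  classical
  -- summability of pf - 1
  have hneg : InD α (fun k => -oneSeq k) := by
    unfold InD
    apply summable_of_ne_finset_zero (s := {0})
    intro k hk
    simp only [Finset.mem_singleton] at hk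
    simp [oneSeq, hk]
  have hsum : InD α (polyMul p f - oneSeq) :=
    ((InD_polyMul p hf).add hneg).congr' fun k => by simp [Pi.sub_apply]; ring
  -- value at 0 of pf
  have hpf0 : polyMul p f 0 = 0 := by
    unfold polyMul
    simp [h0]
  -- the k-th summand
  set g : ℕ → ℝ := fun k => ((k : ℝ) + 1) ^ α * ‖(polyMul p f - oneSeq) k‖ ^ 2 with hg
  have hg0 : g 0 = 1 := by
    simp [hg, Pi.sub_apply, hpf0, oneSeq, Real.one_rpow]
  have hgnn : ∀ k, 0 ≤ g k := fun k => by
    have : (0:ℝ) ≤ ((k:ℝ)+1) ^ α := Real.rpow_nonneg (by positivity) _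
    positivity
  -- comparing with q = 0
  have hq0 : Dnorm2 α (polyMul 0 f - oneSeq) = 1 := by
    have hz : ∀ k, polyMul (0 : Polynomial ℂ) f k = 0 := by
      intro k; unfold polyMul; simp
    unfold Dnorm2
    rw [tsum_eq_single 0]
    · simp [Pi.sub_apply, hz, oneSeq, Real.one_rpow]
    · intro k hk
      simp [Pi.sub_apply, hz, oneSeq, hk]
  have hle : Dnorm2 α (polyMul p f - oneSeq) ≤ 1 := by
    have := hp.2 0 (by simp)
    rwa [hq0] at this
  -- conclude each g k for k ≠ 0 vanishes
  have hzero : ∀ k, polyMul p f k = 0 := by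
    intro k
    rcases eq_or_ne k 0 with rfl | hk
    · exact hpf0
    have hpair : g 0 + g k ≤ Dnorm2 α (polyMul p f - oneSeq) := by
      have h := Summable.sum_le_tsum ({0, k} : Finset ℕ) (fun b _ => hgnn b) hsum
      rw [Finset.sum_pair (Ne.symm hk)] at h
      exact h
    have hgk : g k ≤ 0 := by
      rw [hg0] at hpair
      linarith [hpair.trans hle]
    have hgk0 : ((k:ℝ)+1) ^ α * ‖(polyMul p f - oneSeq) k‖ ^ 2 = 0 :=
      le_antisymm hgk (hgnn k)
    have hpos : (0:ℝ) < ((k:ℝ)+1) ^ α := Real.rpow_pos_of_pos (by positivity) _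
    have : ‖(polyMul p f - oneSeq) k‖ ^ 2 = 0 := by
      rcases mul_eq_zero.mp hgk0 with h | h
      · exact absurd h hpos.ne'
      · exact h
    have hnorm : (polyMul p f - oneSeq) k = 0 := by
      have := pow_eq_zero_iff (n := 2) (by norm_num) |>.mp this
      exact norm_eq_zero.mp this
    have : polyMul p f k - oneSeq k = 0 := hnorm
    simpa [oneSeq, hk] using this
  -- pass to power series
  have hPS : (p : PowerSeries ℂ) * PowerSeries.mk f = 0 := by
    ext k
    rw [PowerSeries.coeff_mul, map_zero]
    rw [Finset.Nat.sum_antidiagonal_eq_sum_range_succ_mk]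
    have := hzero k
    unfold polyMul at this
    rw [← this]
    apply Finset.sum_congr rfl
    intro i _
    rw [Polynomial.coeff_coe, PowerSeries.coeff_mk]
  rcases mul_eq_zero.mp hPS with h | h
  · exact Polynomial.coe_eq_zero_iff.mp h
  · exfalso
    apply hf0
    funext k
    have := congrArg (PowerSeries.coeff k) h
    simpa using this
end

section
/- Let α ≤ 1 and define φ_α(s) = s^{1-α} if α < 1 and φ_α(s) = log⁺(s) if α = 1. For f(z) = ζ − z with ζ on the unit circle, the squared distance dist²_{D_α}(1, f·Poly_n) is comparable (with constants depending only on α) to 1/φ_α(n+1) for all sufficiently large n. -/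
/-- dist²_{D_α}(1, f·Poly_n). -/
noncomputable def distSq (α : ℝ) (f : ℕ → ℂ) (n : ℕ) : ℝ :=
  sInf {x : ℝ | ∃ p : Polynomial ℂ, p.natDegree ≤ n ∧ x = Dnorm2 α (polyMul p f - oneSeq)}

/-- φ_α(s) = s^{1-α} if α < 1, log⁺ s if α = 1. -/
noncomputable def phi (α s : ℝ) : ℝ :=
  if α = 1 then Real.log (max s 1) else s ^ (1 - α)

/-- Coefficient sequence of f(z) = ζ − z. -/
def zetaSeq (ζ : ℂ) : ℕ → ℂ := fun k => if k = 0 then ζ else if k = 1 then -1 else 0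

noncomputable def Ssum (α : ℝ) (n : ℕ) : ℝ :=
  ∑ k ∈ Finset.range (n + 2), ((k : ℝ) + 1) ^ (-α)

lemma Ssum_pos (α : ℝ) (n : ℕ) : 0 < Ssum α n := by
  apply Finset.sum_pos
  · intro k _
    positivity
  · exact ⟨0, by simp⟩

lemma polyMul_zeta (ζ : ℂ) (p : Polynomial ℂ) (k : ℕ) :
    polyMul p (zetaSeq ζ) k = ζ * p.coeff k - (if k = 0 then 0 else p.coeff (k - 1)) := by
  unfold polyMul
  cases k with
  | zero => simp [zetaSeq, mul_comm]
  | succ m =>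
    rw [Finset.sum_range_succ, Finset.sum_range_succ]
    have h0 : ∀ i ∈ Finset.range m, p.coeff i * zetaSeq ζ (m + 1 - i) = 0 := by
      intro i hi
      rw [Finset.mem_range] at hi
      have h1 : m + 1 - i ≠ 0 := by omega
      have h2 : m + 1 - i ≠ 1 := by omega
      simp [zetaSeq, h1, h2]
    rw [Finset.sum_eq_zero h0]
    have h3 : m + 1 - m = 1 := by omega
    simp [zetaSeq, h3]
    ring

lemma cSeq_zero (ζ : ℂ) (p : Polynomial ℂ) (n : ℕ) (hp : p.natDegree ≤ n) :
    ∀ k, n + 2 ≤ k → (polyMul p (zetaSeq ζ) - oneSeq) k = 0 := by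
  intro k hk
  have h1 : p.coeff k = 0 := p.coeff_eq_zero_of_natDegree_lt (by omega)
  have h2 : p.coeff (k - 1) = 0 := p.coeff_eq_zero_of_natDegree_lt (by omega)
  have h3 : k ≠ 0 := by omega
  simp [Pi.sub_apply, polyMul_zeta, oneSeq, h1, h2, h3]

lemma telescope (ζ : ℂ) (p : Polynomial ℂ) (n : ℕ) (hp : p.natDegree ≤ n) :
    ∑ k ∈ Finset.range (n + 2), ζ ^ k * (polyMul p (zetaSeq ζ) - oneSeq) k = -1 := by
  set H : ℕ → ℂ := fun m => if m = 0 then 0 else ζ ^ m * p.coeff (m - 1) with hH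
  have key : ∀ k, ζ ^ k * (polyMul p (zetaSeq ζ) - oneSeq) k
      = (H (k + 1) - H k) - (if k = 0 then 1 else 0) := by
    intro k
    cases k with
    | zero => simp [Pi.sub_apply, polyMul_zeta, oneSeq, hH]
    | succ m =>
      simp only [Pi.sub_apply, polyMul_zeta, oneSeq, hH]
      have : m + 1 ≠ 0 := by omega
      simp [this]
      ring
  rw [Finset.sum_congr rfl (fun k _ => key k), Finset.sum_sub_distrib,
    Finset.sum_range_sub H, Finset.sum_ite_eq' (Finset.range (n + 2)) 0 (fun _ => (1 : ℂ))]
  have h1 : p.coeff (n + 1) = 0 := p.coeff_eq_zero_of_natDegree_lt (by omega)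
  simp [hH, h1]

lemma rpow_sq (x : ℝ) (hx : 0 < x) (a : ℝ) : (x ^ a) ^ 2 = x ^ (2 * a) := by
  rw [← Real.rpow_natCast (x ^ a) 2, ← Real.rpow_mul hx.le]
  norm_num [mul_comm]

lemma dist_lower (α : ℝ) (ζ : ℂ) (hζ : ‖ζ‖ = 1) (n : ℕ) (p : Polynomial ℂ)
    (hp : p.natDegree ≤ n) :
    1 / Ssum α n ≤ Dnorm2 α (polyMul p (zetaSeq ζ) - oneSeq) := by
  set c := polyMul p (zetaSeq ζ) - oneSeq with hc
  have hD : Dnorm2 α c = ∑ k ∈ Finset.range (n + 2), ((k : ℝ) + 1) ^ α * ‖c k‖ ^ 2 := by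
    apply tsum_eq_sum
    intro k hk
    rw [Finset.mem_range, not_lt] at hk
    rw [hc, cSeq_zero ζ p n hp k hk]
    simp
  have h1 : (1 : ℝ) ≤ ∑ k ∈ Finset.range (n + 2), ‖c k‖ := by
    calc (1 : ℝ) = ‖∑ k ∈ Finset.range (n + 2), ζ ^ k * c k‖ := by
          rw [telescope ζ p n hp]; simp
    _ ≤ ∑ k ∈ Finset.range (n + 2), ‖ζ ^ k * c k‖ := norm_sum_le _ _
    _ = ∑ k ∈ Finset.range (n + 2), ‖c k‖ := by
        apply Finset.sum_congr rfl; intro k _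
        rw [norm_mul, norm_pow, hζ, one_pow, one_mul]
  have hCS : (∑ k ∈ Finset.range (n + 2), ‖c k‖) ^ 2
      ≤ Ssum α n * ∑ k ∈ Finset.range (n + 2), ((k : ℝ) + 1) ^ α * ‖c k‖ ^ 2 := by
    have H := Finset.sum_mul_sq_le_sq_mul_sq (Finset.range (n + 2))
      (fun k => ((k : ℝ) + 1) ^ (-(α / 2))) (fun k => ((k : ℝ) + 1) ^ (α / 2) * ‖c k‖)
    have e1 : ∀ k ∈ Finset.range (n + 2),
        ((k : ℝ) + 1) ^ (-(α / 2)) * (((k : ℝ) + 1) ^ (α / 2) * ‖c k‖) = ‖c k‖ := by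
      intro k _
      have hx : (0 : ℝ) < (k : ℝ) + 1 := by positivity
      rw [← mul_assoc, ← Real.rpow_add hx]
      norm_num
    have e2 : ∀ k ∈ Finset.range (n + 2),
        (((k : ℝ) + 1) ^ (-(α / 2))) ^ 2 = ((k : ℝ) + 1) ^ (-α) := by
      intro k _
      have hx : (0 : ℝ) < (k : ℝ) + 1 := by positivity
      rw [rpow_sq _ hx]; ring_nf
    have e3 : ∀ k ∈ Finset.range (n + 2),
        (((k : ℝ) + 1) ^ (α / 2) * ‖c k‖) ^ 2 = ((k : ℝ) + 1) ^ α * ‖c k‖ ^ 2 := by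
      intro k _
      have hx : (0 : ℝ) < (k : ℝ) + 1 := by positivity
      rw [mul_pow, rpow_sq _ hx]
      ring_nf
    rw [Finset.sum_congr rfl e1, Finset.sum_congr rfl e2, Finset.sum_congr rfl e3] at H
    exact H
  have hS := Ssum_pos α n
  rw [hD, div_le_iff₀ hS]
  nlinarith [h1, hCS, Ssum_pos α n]

lemma dist_mem (α : ℝ) (ζ : ℂ) (hζ : ‖ζ‖ = 1) (n : ℕ) :
    ∃ p : Polynomial ℂ, p.natDegree ≤ n ∧
      Dnorm2 α (polyMul p (zetaSeq ζ) - oneSeq) = 1 / Ssum α n := by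
  have hζ0 : ζ ≠ 0 := by
    intro h; rw [h] at hζ; simp at hζ
  have hS := Ssum_pos α n
  set S := Ssum α n with hSdef
  set T : ℕ → ℝ := fun k => ∑ j ∈ Finset.Ico k (n + 2), ((j : ℝ) + 1) ^ (-α) with hT
  have hT0 : T 0 = S := by
    rw [hT, hSdef, Ssum, Finset.range_eq_Ico]
  have hTtop : T (n + 2) = 0 := by simp [hT]
  have hTdiff : ∀ k, k ≤ n + 1 → T k - T (k + 1) = ((k : ℝ) + 1) ^ (-α) := by
    intro k hk
    have h : T k = ((k : ℝ) + 1) ^ (-α) + T (k + 1) :=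
      Finset.sum_eq_sum_Ico_succ_bot (show k < n + 2 by omega) _
    rw [h]; ring
  set g : ℕ → ℂ := fun k => (ζ⁻¹) ^ (k + 1) * ((T (k + 1) / S : ℝ) : ℂ) with hg
  set p : Polynomial ℂ := ∑ k ∈ Finset.range (n + 1), Polynomial.C (g k) * Polynomial.X ^ k
    with hp
  have hcoeff : ∀ m, p.coeff m = if m < n + 1 then g m else 0 := by
    intro m
    rw [hp, Polynomial.finset_sum_coeff]
    simp only [Polynomial.coeff_C_mul, Polynomial.coeff_X_pow, mul_ite, mul_one, mul_zero]
    rw [Finset.sum_ite_eq (Finset.range (n + 1)) m g]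
    simp [Finset.mem_range]
  have hdeg : p.natDegree ≤ n := by
    rw [Polynomial.natDegree_le_iff_coeff_eq_zero]
    intro m hm
    rw [hcoeff]
    rw [if_neg (by omega)]
  have hpc : ∀ m, m ≤ n + 1 → p.coeff m = (ζ⁻¹) ^ (m + 1) * ((T (m + 1) / S : ℝ) : ℂ) := by
    intro m hm
    rcases Nat.lt_or_ge m (n + 1) with h | h
    · rw [hcoeff, if_pos h]
    · have : m = n + 1 := by omega
      subst this
      rw [hcoeff, if_neg (by omega), hTtop]
      simp
  refine ⟨p, hdeg, ?_⟩
  set c := polyMul p (zetaSeq ζ) - oneSeq with hc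
  have key : ∀ k, k ≤ n + 1 → ζ ^ k * c k = (((-(((k : ℝ) + 1) ^ (-α)) / S : ℝ)) : ℂ) := by
    intro k hk
    have hinv : ∀ j : ℕ, ζ ^ j * (ζ⁻¹) ^ j = 1 := by
      intro j
      rw [← mul_pow, mul_inv_cancel₀ hζ0, one_pow]
    have hmain : ζ ^ (k + 1) * p.coeff k = ((T (k + 1) / S : ℝ) : ℂ) := by
      rw [hpc k hk, ← mul_assoc, hinv, one_mul]
    have hS' : S ≠ 0 := hS.ne'
    cases k with
    | zero =>
      have hck0 : c 0 = ζ * p.coeff 0 - 1 := by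
        rw [hc]
        simp [polyMul_zeta, oneSeq]
      rw [pow_zero, one_mul, hck0]
      have h0 : ζ * p.coeff 0 = ((T 1 / S : ℝ) : ℂ) := by
        have := hmain
        simpa using this
      rw [h0]
      have hd : S - T 1 = (((0 : ℕ) : ℝ) + 1) ^ (-α) := by
        have := hTdiff 0 (by omega)
        rw [hT0] at this
        simpa using this
      have hr : T 1 / S - 1 = -((((0 : ℕ) : ℝ) + 1) ^ (-α)) / S := by
        norm_num at hd
        field_simp
        linarith [show (((0 : ℕ) : ℝ) + 1) ^ (-α) = 1 by simp]
      rw [← hr]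
      push_cast
      ring
    | succ m =>
      have hckm : c (m + 1) = ζ * p.coeff (m + 1) - p.coeff m := by
        rw [hc]
        simp [polyMul_zeta, oneSeq]
      rw [hckm]
      have hprev : ζ ^ (m + 1) * p.coeff m = ((T (m + 1) / S : ℝ) : ℂ) := by
        rw [hpc m (by omega), ← mul_assoc, hinv, one_mul]
      have hcur : ζ ^ (m + 1) * (ζ * p.coeff (m + 1)) = ((T (m + 2) / S : ℝ) : ℂ) := by
        rw [← mul_assoc, ← pow_succ]
        exact hmain
      rw [mul_sub, hcur, hprev]
      have hd : T (m + 1) - T (m + 2) = (((m + 1 : ℕ) : ℝ) + 1) ^ (-α) := hTdiff (m + 1) (by omega)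
      have hr : T (m + 2) / S - T (m + 1) / S
          = -((((m + 1 : ℕ) : ℝ) + 1) ^ (-α)) / S := by
        push_cast at hd
        field_simp
        linarith [show (((m + 1 : ℕ) : ℝ) + 1) ^ (-α) = ((m : ℝ) + 1 + 1) ^ (-α) by simp]
      rw [← hr]
      push_cast
      ring
  have hnorm : ∀ k, k ≤ n + 1 → ‖c k‖ = ((k : ℝ) + 1) ^ (-α) / S := by
    intro k hk
    have h1 : ‖ζ ^ k * c k‖ = ‖c k‖ := by
      rw [norm_mul, norm_pow, hζ, one_pow, one_mul]
    rw [← h1, key k hk]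
    rw [Complex.norm_real, neg_div, norm_neg, Real.norm_eq_abs,
      abs_of_nonneg (by positivity : (0 : ℝ) ≤ ((k : ℝ) + 1) ^ (-α) / S)]
  have hDval : Dnorm2 α c = ∑ k ∈ Finset.range (n + 2), ((k : ℝ) + 1) ^ α * ‖c k‖ ^ 2 := by
    apply tsum_eq_sum
    intro k hk
    rw [Finset.mem_range, not_lt] at hk
    rw [hc, cSeq_zero ζ p n hdeg k hk]
    simp
  rw [hDval]
  have hterm : ∀ k ∈ Finset.range (n + 2),
      ((k : ℝ) + 1) ^ α * ‖c k‖ ^ 2 = ((k : ℝ) + 1) ^ (-α) / S ^ 2 := by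
    intro k hk
    rw [Finset.mem_range] at hk
    rw [hnorm k (by omega)]
    have hx : (0 : ℝ) < (k : ℝ) + 1 := by positivity
    rw [div_pow, ← Real.rpow_natCast (((k : ℝ) + 1) ^ (-α)) 2, ← Real.rpow_mul hx.le,
      ← mul_div_assoc, ← Real.rpow_add hx]
    congr 2
    push_cast
    ring
  rw [Finset.sum_congr rfl hterm, ← Finset.sum_div]
  show S / S ^ 2 = 1 / S
  rw [sq]
  field_simp

lemma distSq_eq (α : ℝ) (ζ : ℂ) (hζ : ‖ζ‖ = 1) (n : ℕ) :
    distSq α (zetaSeq ζ) n = 1 / Ssum α n := by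
  obtain ⟨p, hdeg, hval⟩ := dist_mem α ζ hζ n
  have hbdd : ∀ x ∈ {x : ℝ | ∃ q : Polynomial ℂ,
      q.natDegree ≤ n ∧ x = Dnorm2 α (polyMul q (zetaSeq ζ) - oneSeq)}, 1 / Ssum α n ≤ x := by
    rintro x ⟨q, hq, rfl⟩
    exact dist_lower α ζ hζ n q hq
  unfold distSq
  apply le_antisymm
  · exact csInf_le ⟨1 / Ssum α n, hbdd⟩ ⟨p, hdeg, hval.symm⟩
  · exact le_csInf ⟨_, ⟨p, hdeg, hval.symm⟩⟩ hbdd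

lemma bernoulliA {γ : ℝ} (h0 : 0 < γ) (h1 : γ ≤ 1) (k : ℕ) :
    γ * ((k : ℝ) + 1) ^ (γ - 1) ≤ ((k : ℝ) + 1) ^ γ - (k : ℝ) ^ γ := by
  set x : ℝ := (k : ℝ) + 1 with hxdef
  have hx0 : (0 : ℝ) < x := by positivity
  have hx1 : (1 : ℝ) ≤ x := by simp [hxdef]
  have hinv : 1 / x ≤ 1 := div_le_one_of_le₀ hx1 hx0.le
  have hs : (-1 : ℝ) ≤ -(1 / x) := by linarith
  have hb := rpow_one_add_le_one_add_mul_self hs h0.le h1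
  have hxs : (k : ℝ) = x * (1 + -(1 / x)) := by
    field_simp
    rw [hxdef]; ring
  have h1s : (0 : ℝ) ≤ 1 + -(1 / x) := by linarith
  have hmul : (k : ℝ) ^ γ ≤ x ^ γ * (1 + γ * -(1 / x)) := by
    rw [hxs, Real.mul_rpow hx0.le h1s]
    exact mul_le_mul_of_nonneg_left hb (Real.rpow_nonneg hx0.le γ)
  have hpow : x ^ γ * (1 / x) = x ^ (γ - 1) := by
    rw [Real.rpow_sub hx0, Real.rpow_one]
    ring
  have hexp : x ^ γ * (1 + γ * -(1 / x)) = x ^ γ - γ * x ^ (γ - 1) := by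
    rw [← hpow]; ring
  rw [hexp] at hmul
  linarith

lemma bernoulliB {γ : ℝ} (h1 : 1 ≤ γ) (k : ℕ) :
    ((k : ℝ) + 1) ^ γ - (k : ℝ) ^ γ ≤ γ * ((k : ℝ) + 1) ^ (γ - 1) := by
  set x : ℝ := (k : ℝ) + 1 with hxdef
  have hx0 : (0 : ℝ) < x := by positivity
  have hx1 : (1 : ℝ) ≤ x := by simp [hxdef]
  have hinv : 1 / x ≤ 1 := div_le_one_of_le₀ hx1 hx0.le
  have hs : (-1 : ℝ) ≤ -(1 / x) := by linarith
  have hb := one_add_mul_self_le_rpow_one_add hs h1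
  have hxs : (k : ℝ) = x * (1 + -(1 / x)) := by
    field_simp
    rw [hxdef]; ring
  have h1s : (0 : ℝ) ≤ 1 + -(1 / x) := by linarith
  have hmul : x ^ γ * (1 + γ * -(1 / x)) ≤ (k : ℝ) ^ γ := by
    rw [hxs, Real.mul_rpow hx0.le h1s]
    exact mul_le_mul_of_nonneg_left hb (Real.rpow_nonneg hx0.le γ)
  have hpow : x ^ γ * (1 / x) = x ^ (γ - 1) := by
    rw [Real.rpow_sub hx0, Real.rpow_one]
    ring
  have hexp : x ^ γ * (1 + γ * -(1 / x)) = x ^ γ - γ * x ^ (γ - 1) := by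
    rw [← hpow]; ring
  rw [hexp] at hmul
  linarith

lemma sum_telescope_rpow {γ : ℝ} (hγ : 0 < γ) (m : ℕ) :
    ∑ k ∈ Finset.range m, (((k : ℝ) + 1) ^ γ - (k : ℝ) ^ γ) = (m : ℝ) ^ γ := by
  have h : ∀ k ∈ Finset.range m, ((k : ℝ) + 1) ^ γ - (k : ℝ) ^ γ
      = (fun j : ℕ => ((j : ℝ)) ^ γ) (k + 1) - (fun j : ℕ => ((j : ℝ)) ^ γ) k := by
    intro k _
    push_cast
    rfl
  rw [Finset.sum_congr rfl h, Finset.sum_range_sub (fun j : ℕ => ((j : ℝ)) ^ γ)]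
  simp [Real.zero_rpow hγ.ne']

lemma Ssum_le (α : ℝ) (hα : α < 1) (n : ℕ) :
    Ssum α n ≤ max (1 / (1 - α)) 1 * ((n : ℝ) + 2) ^ (1 - α) := by
  set γ : ℝ := 1 - α with hγdef
  have hγ : 0 < γ := by simp [hγdef]; linarith
  have hcast : ((n + 2 : ℕ) : ℝ) = (n : ℝ) + 2 := by push_cast; ring
  have hexp : ∀ k : ℕ, ((k : ℝ) + 1) ^ (-α) = ((k : ℝ) + 1) ^ (γ - 1) := by
    intro k; congr 1; rw [hγdef]; ring
  rcases le_or_gt γ 1 with h1 | h1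
  · -- γ ≤ 1 : use bernoulliA, S ≤ m^γ / γ
    have hsum : γ * Ssum α n ≤ ((n : ℝ) + 2) ^ γ := by
      rw [Ssum, Finset.mul_sum, ← hcast, ← sum_telescope_rpow hγ (n + 2)]
      apply Finset.sum_le_sum
      intro k _
      rw [hexp k]
      exact bernoulliA hγ h1 k
    have : Ssum α n ≤ 1 / γ * ((n : ℝ) + 2) ^ γ := by
      rw [div_mul_eq_mul_div, le_div_iff₀ hγ]
      linarith
    calc Ssum α n ≤ 1 / γ * ((n : ℝ) + 2) ^ γ := this
    _ ≤ max (1 / γ) 1 * ((n : ℝ) + 2) ^ γ := by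
        apply mul_le_mul_of_nonneg_right (le_max_left _ _) (Real.rpow_nonneg (by positivity) _)
  · -- γ > 1 : terms increasing, S ≤ m * m^(γ-1) = m^γ
    have hsum : Ssum α n ≤ ((n : ℝ) + 2) ^ γ := by
      have hterm : ∀ k ∈ Finset.range (n + 2),
          ((k : ℝ) + 1) ^ (-α) ≤ ((n : ℝ) + 2) ^ (γ - 1) := by
        intro k hk
        rw [Finset.mem_range] at hk
        rw [hexp k]
        have hk2 : k ≤ n + 1 := by omega
        have hk' : (k : ℝ) ≤ (n : ℝ) + 1 := by exact_mod_cast hk2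
        apply Real.rpow_le_rpow (by positivity) (by linarith) (by linarith)
      calc Ssum α n ≤ ∑ _k ∈ Finset.range (n + 2), ((n : ℝ) + 2) ^ (γ - 1) :=
            Finset.sum_le_sum hterm
      _ = ((n : ℝ) + 2) * ((n : ℝ) + 2) ^ (γ - 1) := by
          rw [Finset.sum_const, Finset.card_range]
          push_cast
          ring
      _ = ((n : ℝ) + 2) ^ γ := by
          nth_rewrite 1 [show (n : ℝ) + 2 = ((n : ℝ) + 2) ^ (1 : ℝ) from (Real.rpow_one _).symm]
          rw [← Real.rpow_add (by positivity)]
          ring_nf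
    calc Ssum α n ≤ ((n : ℝ) + 2) ^ γ := hsum
    _ ≤ max (1 / γ) 1 * ((n : ℝ) + 2) ^ γ := by
        nth_rewrite 1 [← one_mul (((n : ℝ) + 2) ^ γ)]
        apply mul_le_mul_of_nonneg_right (le_max_right _ _) (Real.rpow_nonneg (by positivity) _)

lemma Ssum_ge (α : ℝ) (hα : α < 1) (n : ℕ) :
    min (1 / (1 - α)) 1 * ((n : ℝ) + 2) ^ (1 - α) ≤ Ssum α n := by
  set γ : ℝ := 1 - α with hγdef
  have hγ : 0 < γ := by simp [hγdef]; linarith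
  have hcast : ((n + 2 : ℕ) : ℝ) = (n : ℝ) + 2 := by push_cast; ring
  have hexp : ∀ k : ℕ, ((k : ℝ) + 1) ^ (-α) = ((k : ℝ) + 1) ^ (γ - 1) := by
    intro k; congr 1; rw [hγdef]; ring
  rcases le_or_gt γ 1 with h1 | h1
  · -- γ ≤ 1 : terms decreasing, S ≥ m * m^(γ-1) = m^γ
    have hsum : ((n : ℝ) + 2) ^ γ ≤ Ssum α n := by
      have hterm : ∀ k ∈ Finset.range (n + 2),
          ((n : ℝ) + 2) ^ (γ - 1) ≤ ((k : ℝ) + 1) ^ (-α) := by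
        intro k hk
        rw [Finset.mem_range] at hk
        rw [hexp k]
        have hk2 : k ≤ n + 1 := by omega
        have hk' : (k : ℝ) ≤ (n : ℝ) + 1 := by exact_mod_cast hk2
        apply Real.rpow_le_rpow_of_nonpos (by positivity) (by linarith) (by linarith)
      calc ((n : ℝ) + 2) ^ γ = ((n : ℝ) + 2) * ((n : ℝ) + 2) ^ (γ - 1) := by
            nth_rewrite 1 [show γ = 1 + (γ - 1) by ring]
            rw [Real.rpow_add (by positivity), Real.rpow_one]
      _ = ∑ _k ∈ Finset.range (n + 2), ((n : ℝ) + 2) ^ (γ - 1) := by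
            rw [Finset.sum_const, Finset.card_range]
            push_cast
            ring
      _ ≤ Ssum α n := Finset.sum_le_sum hterm
    calc min (1 / γ) 1 * ((n : ℝ) + 2) ^ γ ≤ 1 * ((n : ℝ) + 2) ^ γ := by
          apply mul_le_mul_of_nonneg_right (min_le_right _ _) (Real.rpow_nonneg (by positivity) _)
    _ = ((n : ℝ) + 2) ^ γ := one_mul _
    _ ≤ Ssum α n := hsum
  · -- γ > 1 : bernoulliB gives m^γ ≤ γ * S
    have hsum : ((n : ℝ) + 2) ^ γ ≤ γ * Ssum α n := by
      rw [Ssum, Finset.mul_sum, ← hcast, ← sum_telescope_rpow hγ (n + 2)]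
      apply Finset.sum_le_sum
      intro k _
      rw [hexp k]
      exact bernoulliB h1.le k
    calc min (1 / γ) 1 * ((n : ℝ) + 2) ^ γ ≤ 1 / γ * ((n : ℝ) + 2) ^ γ := by
          apply mul_le_mul_of_nonneg_right (min_le_left _ _) (Real.rpow_nonneg (by positivity) _)
    _ ≤ Ssum α n := by
          rw [div_mul_eq_mul_div, div_le_iff₀ hγ]
          linarith

lemma Ssum_one (n : ℕ) : Ssum 1 n = (harmonic (n + 2) : ℝ) := by
  rw [Ssum, harmonic]
  push_cast
  apply Finset.sum_congr rfl
  intro k _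
  rw [Real.rpow_neg_one]

/-- for f(z) = ζ − z with |ζ| = 1 and α ≤ 1, dist²_{D_α}(1, f·Poly_n) is
comparable to 1/φ_α(n+1) for all sufficiently large n. -/
theorem stmt13 (α : ℝ) (hα : α ≤ 1) (ζ : ℂ) (hζ : ‖ζ‖ = 1) :
    ∃ c C : ℝ, 0 < c ∧ c ≤ C ∧ ∃ N : ℕ, ∀ n : ℕ, N ≤ n →
      c / phi α ((n : ℝ) + 1) ≤ distSq α (zetaSeq ζ) n ∧
      distSq α (zetaSeq ζ) n ≤ C / phi α ((n : ℝ) + 1) := by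
  by_cases h1 : α = 1
  · subst h1
    refine ⟨1/3, 1, by norm_num, by norm_num, 2, ?_⟩
    intro n hn
    have hn2 : (2 : ℝ) ≤ (n : ℝ) := by exact_mod_cast hn
    have hφ : phi 1 ((n : ℝ) + 1) = Real.log ((n : ℝ) + 1) := by
      rw [phi, if_pos rfl, max_eq_left (by linarith : (1 : ℝ) ≤ (n : ℝ) + 1)]
    have hS := Ssum_pos 1 n
    have hSh : Ssum 1 n = (harmonic (n + 2) : ℝ) := Ssum_one n
    have hlog1 : (1 : ℝ) ≤ Real.log ((n : ℝ) + 1) := by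
      rw [Real.le_log_iff_exp_le (by linarith)]
      calc Real.exp 1 ≤ 2.7182818286 := Real.exp_one_lt_d9.le
      _ ≤ 3 := by norm_num
      _ ≤ (n : ℝ) + 1 := by linarith
    have hup : Real.log ((n : ℝ) + 1) ≤ Ssum 1 n := by
      rw [hSh]
      calc Real.log ((n : ℝ) + 1) ≤ Real.log (((n + 2 : ℕ) : ℝ) + 1) := by
            apply Real.log_le_log (by linarith)
            push_cast
            linarith
      _ ≤ (harmonic (n + 2) : ℝ) := by
            have := log_add_one_le_harmonic (n + 2)
            push_cast at this ⊢
            norm_num at this ⊢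
            convert this using 2
    have hdown : Ssum 1 n ≤ 3 * Real.log ((n : ℝ) + 1) := by
      rw [hSh]
      have h2 : (harmonic (n + 2) : ℝ) ≤ 1 + Real.log ((n : ℝ) + 2) := by
        have := harmonic_le_one_add_log (n + 2)
        push_cast at this
        convert this using 3 <;> push_cast <;> ring
      have h3 : Real.log ((n : ℝ) + 2) ≤ 2 * Real.log ((n : ℝ) + 1) := by
        rw [show (2 : ℝ) * Real.log ((n : ℝ) + 1) = Real.log (((n : ℝ) + 1) ^ (2 : ℕ)) by
          rw [Real.log_pow]; push_cast; ring]
        apply Real.log_le_log (by linarith)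
        nlinarith
      linarith
    rw [distSq_eq 1 ζ hζ n, hφ]
    have hφpos : (0 : ℝ) < Real.log ((n : ℝ) + 1) := by linarith
    constructor
    · rw [div_le_div_iff₀ hφpos hS]
      linarith
    · rw [div_le_div_iff₀ hS hφpos]
      linarith
  · have hlt : α < 1 := lt_of_le_of_ne hα h1
    set γ : ℝ := 1 - α with hγdef
    have hγ : 0 < γ := by rw [hγdef]; linarith
    set A : ℝ := max (1 / γ) 1 with hAdef
    set B : ℝ := min (1 / γ) 1 with hBdef
    have hA1 : (1 : ℝ) ≤ A := le_max_right _ _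
    have hA : 0 < A := by linarith
    have hB : 0 < B := lt_min (by positivity) one_pos
    have hB1 : B ≤ 1 := min_le_right _ _
    have h2γ : (0 : ℝ) < 2 ^ γ := Real.rpow_pos_of_pos two_pos γ
    have h2γ1 : (1 : ℝ) ≤ 2 ^ γ := by
      calc (1 : ℝ) = 2 ^ (0 : ℝ) := (Real.rpow_zero 2).symm
      _ ≤ 2 ^ γ := Real.rpow_le_rpow_of_exponent_le one_le_two hγ.le
    refine ⟨1 / (A * 2 ^ γ), 1 / B, by positivity, ?_, 0, ?_⟩
    · apply one_div_le_one_div_of_le hB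
      nlinarith
    intro n _
    have hφ : phi α ((n : ℝ) + 1) = ((n : ℝ) + 1) ^ γ := by
      rw [phi, if_neg h1]
    have hφpos : 0 < ((n : ℝ) + 1) ^ γ := Real.rpow_pos_of_pos (by positivity) _
    have hS := Ssum_pos α n
    have h12 : ((n : ℝ) + 1) ^ γ ≤ ((n : ℝ) + 2) ^ γ :=
      Real.rpow_le_rpow (by positivity) (by linarith) hγ.le
    have h21 : ((n : ℝ) + 2) ^ γ ≤ 2 ^ γ * ((n : ℝ) + 1) ^ γ := by
      rw [← Real.mul_rpow (by norm_num) (by positivity)]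
      exact Real.rpow_le_rpow (by positivity) (by linarith) hγ.le
    have hup := Ssum_le α hlt n
    have hdown := Ssum_ge α hlt n
    have key1 : Ssum α n ≤ A * 2 ^ γ * ((n : ℝ) + 1) ^ γ := by
      calc Ssum α n ≤ A * ((n : ℝ) + 2) ^ γ := hup
      _ ≤ A * (2 ^ γ * ((n : ℝ) + 1) ^ γ) := mul_le_mul_of_nonneg_left h21 hA.le
      _ = A * 2 ^ γ * ((n : ℝ) + 1) ^ γ := by ring
    have key2 : B * ((n : ℝ) + 1) ^ γ ≤ Ssum α n :=
      le_trans (mul_le_mul_of_nonneg_left h12 hB.le) hdown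
    rw [distSq_eq α ζ hζ n, hφ]
    constructor
    · rw [div_le_div_iff₀ hφpos hS, one_mul, one_div, inv_mul_eq_div,
        div_le_iff₀ (by positivity : (0 : ℝ) < A * 2 ^ γ)]
      nlinarith
    · rw [div_le_div_iff₀ hS hφpos, one_mul, one_div, inv_mul_eq_div,
        le_div_iff₀ hB]
      nlinarith
end

section
/- Let α ≤ 1, and let f be a polynomial of degree t whose zeros are simple and lie outside the open unit disk. Then for each n > t there exists a polynomial p_n of degree at most n with (p_n f)(0) = 1 such that ‖p_n f − 1‖²_α ≤ C/φ_α(n+1), where C depends on f and α but not on n, and moreover the Wiener-algebra norms ‖p_n f‖_{A(𝕋)} are uniformly bounded in n. -/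
open Polynomial Finset

namespace Stmt14Aux

noncomputable def u (α : ℝ) (i : ℕ) : ℝ := ((i : ℝ) + 1) ^ (-α)

noncomputable def S (α : ℝ) (N : ℕ) : ℝ := ∑ i ∈ Finset.range N, u α i

lemma u_pos (α : ℝ) (i : ℕ) : 0 < u α i :=
  Real.rpow_pos_of_pos (by positivity) _

lemma S_nonneg (α : ℝ) (N : ℕ) : 0 ≤ S α N :=
  Finset.sum_nonneg fun i _ => (u_pos α i).le

lemma S_zero (α : ℝ) : S α 0 = 0 := by simp [S]

lemma one_le_S (α : ℝ) (N : ℕ) (hN : 1 ≤ N) : 1 ≤ S α N := by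
  have h0 : u α 0 = 1 := by simp [u]
  calc (1:ℝ) = u α 0 := h0.symm
    _ ≤ S α N := Finset.single_le_sum (fun i _ => (u_pos α i).le)
        (Finset.mem_range.2 hN)

lemma S_pos (α : ℝ) (N : ℕ) (hN : 1 ≤ N) : 0 < S α N :=
  lt_of_lt_of_le one_pos (one_le_S α N hN)

lemma S_mono (α : ℝ) {a b : ℕ} (h : a ≤ b) : S α a ≤ S α b :=
  Finset.sum_le_sum_of_subset_of_nonneg (Finset.range_subset_range.2 h)
    (fun i _ _ => (u_pos α i).le)

lemma S_sub (α : ℝ) {a b : ℕ} (h : a ≤ b) :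
    S α b - S α a = ∑ i ∈ Finset.Ico a b, u α i := by
  rw [S, S, Finset.range_eq_Ico,
    ← Finset.sum_Ico_consecutive (fun i => u α i) (Nat.zero_le a) h, ← Finset.range_eq_Ico]
  ring

lemma le_single_S (α : ℝ) {i N : ℕ} (h : i < N) : u α i ≤ S α N :=
  Finset.single_le_sum (fun j _ => (u_pos α j).le) (Finset.mem_range.2 h)

/-- key ratio bound: for `i ≤ m ≤ i + t`, `u α i ≤ (t+1) * u α m` (needs `α ≤ 1`). -/
lemma u_ratio_le {α : ℝ} (hα : α ≤ 1) (t : ℕ) {i m : ℕ} (h1 : i ≤ m) (h2 : m ≤ i + t) :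
    u α i ≤ ((t : ℝ) + 1) * u α m := by
  set x : ℝ := (i : ℝ) + 1 with hxdef
  set y : ℝ := (m : ℝ) + 1 with hydef
  have hx : (1:ℝ) ≤ x := by
    simp only [hxdef]
    have : (0:ℝ) ≤ (i:ℝ) := Nat.cast_nonneg i
    linarith
  have hx0 : (0:ℝ) < x := by positivity
  have hy0 : (0:ℝ) < y := by positivity
  have hxy : x ≤ y := by
    simp only [hxdef, hydef]
    exact_mod_cast Nat.add_le_add_right h1 1
  have hyt : y ≤ ((t:ℝ)+1) * x := by
    have : (m : ℝ) ≤ (i : ℝ) + (t : ℝ) := by exact_mod_cast h2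
    nlinarith [Nat.cast_nonneg (α := ℝ) i, Nat.cast_nonneg (α := ℝ) t]
  show x ^ (-α) ≤ ((t:ℝ)+1) * y ^ (-α)
  rcases le_or_gt α 0 with h0 | h0
  · have h1' : x ^ (-α) ≤ y ^ (-α) :=
      Real.rpow_le_rpow hx0.le hxy (by linarith)
    have : (0:ℝ) ≤ y ^ (-α) := (Real.rpow_pos_of_pos hy0 _).le
    nlinarith [Nat.cast_nonneg (α := ℝ) t]
  · have hyx1 : (1:ℝ) ≤ y / x := (one_le_div hx0).2 hxy
    have key : (y / x) ^ α ≤ y / x := by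
      calc (y/x) ^ α ≤ (y/x) ^ (1:ℝ) :=
            Real.rpow_le_rpow_of_exponent_le hyx1 hα
        _ = y / x := Real.rpow_one _
    have hdiv : (y / x) ^ α = y ^ α / x ^ α := Real.div_rpow hy0.le hx0.le α
    have hxa : (0:ℝ) < x ^ α := Real.rpow_pos_of_pos hx0 _
    have hya : (0:ℝ) < y ^ α := Real.rpow_pos_of_pos hy0 _
    have hxneg : x ^ (-α) = (x ^ α)⁻¹ := Real.rpow_neg hx0.le α
    have hyneg : y ^ (-α) = (y ^ α)⁻¹ := Real.rpow_neg hy0.le α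
    have hyxle : y / x ≤ (t:ℝ)+1 := by
      rw [div_le_iff₀ hx0]; linarith
    have hid : y ^ (-α) * (y / x) ^ α = x ^ (-α) := by
      rw [hdiv, hyneg, hxneg]
      field_simp
    have key2 : (y / x) ^ α ≤ (t:ℝ) + 1 := le_trans key hyxle
    calc x ^ (-α) = y ^ (-α) * (y / x) ^ α := hid.symm
      _ ≤ y ^ (-α) * ((t:ℝ) + 1) := by
          apply mul_le_mul_of_nonneg_left key2 (Real.rpow_pos_of_pos hy0 _).le
      _ = ((t:ℝ) + 1) * y ^ (-α) := mul_comm _ _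

/-- other direction: for `i ≤ m ≤ i + t`, `u α m ≤ max 1 ((t+1)^(-α)) * u α i`. -/
lemma u_ratio_le' (α : ℝ) (t : ℕ) {i m : ℕ} (h1 : i ≤ m) (h2 : m ≤ i + t) :
    u α m ≤ max 1 (((t:ℝ) + 1) ^ (-α)) * u α i := by
  set x : ℝ := (i : ℝ) + 1 with hxdef
  set y : ℝ := (m : ℝ) + 1 with hydef
  have hx0 : (0:ℝ) < x := by positivity
  have hy0 : (0:ℝ) < y := by positivity
  have hxy : x ≤ y := by
    simp only [hxdef, hydef]
    exact_mod_cast Nat.add_le_add_right h1 1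
  have hyt : y ≤ ((t:ℝ)+1) * x := by
    have : (m : ℝ) ≤ (i : ℝ) + (t : ℝ) := by exact_mod_cast h2
    nlinarith [Nat.cast_nonneg (α := ℝ) i, Nat.cast_nonneg (α := ℝ) t]
  have hxa : (0:ℝ) < x ^ (-α) := Real.rpow_pos_of_pos hx0 _
  show y ^ (-α) ≤ max 1 (((t:ℝ) + 1) ^ (-α)) * x ^ (-α)
  rcases le_or_gt 0 α with h0 | h0
  · have h1' : y ^ (-α) ≤ x ^ (-α) :=
      Real.rpow_le_rpow_of_nonpos hx0 hxy (by linarith)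
    calc y ^ (-α) ≤ x ^ (-α) := h1'
      _ = 1 * x ^ (-α) := (one_mul _).symm
      _ ≤ max 1 (((t:ℝ) + 1) ^ (-α)) * x ^ (-α) :=
          mul_le_mul_of_nonneg_right (le_max_left _ _) hxa.le
  · have h1' : y ^ (-α) ≤ (((t:ℝ)+1) * x) ^ (-α) :=
      Real.rpow_le_rpow hy0.le hyt (by linarith)
    have h2' : (((t:ℝ)+1) * x) ^ (-α) = ((t:ℝ)+1) ^ (-α) * x ^ (-α) :=
      Real.mul_rpow (by positivity) hx0.le
    calc y ^ (-α) ≤ ((t:ℝ)+1) ^ (-α) * x ^ (-α) := by rw [← h2']; exact h1'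
      _ ≤ max 1 (((t:ℝ) + 1) ^ (-α)) * x ^ (-α) :=
          mul_le_mul_of_nonneg_right (le_max_right _ _) hxa.le

lemma log_le_harmonic (m : ℕ) :
    Real.log ((m : ℝ) + 1) ≤ ∑ i ∈ Finset.range m, ((i : ℝ) + 1)⁻¹ := by
  induction m with
  | zero => simp
  | succ m ih =>
    rw [Finset.sum_range_succ]
    have hm1 : (0:ℝ) < (m:ℝ) + 1 := by positivity
    have hm2 : (0:ℝ) < (m:ℝ) + 2 := by positivity
    have hlog : Real.log ((m:ℝ) + 2) = Real.log ((m:ℝ)+1) + Real.log (((m:ℝ)+2)/((m:ℝ)+1)) := by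
      rw [← Real.log_mul hm1.ne' (by positivity)]
      congr 1
      field_simp
    have hstep : Real.log (((m:ℝ)+2)/((m:ℝ)+1)) ≤ ((m:ℝ)+1)⁻¹ := by
      have := Real.log_le_sub_one_of_pos (x := ((m:ℝ)+2)/((m:ℝ)+1)) (by positivity)
      have heq : ((m:ℝ)+2)/((m:ℝ)+1) - 1 = ((m:ℝ)+1)⁻¹ := by
        field_simp
        norm_num
      linarith
    have : ((m:ℝ) + 1 + 1) = (m:ℝ) + 2 := by ring
    rw [Nat.cast_succ, this, hlog]
    exact add_le_add ih hstep

/-- `phi α N ≤ C₃ * S α N` with `C₃ = 2 / min 1 (2^α)`. -/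
lemma phi_le_S {α : ℝ} (hα : α ≤ 1) (N : ℕ) (hN : 1 ≤ N) :
    phi α (N : ℝ) ≤ (2 / min 1 ((2:ℝ) ^ α)) * S α N := by
  have hcmin : (0:ℝ) < min 1 ((2:ℝ) ^ α) :=
    lt_min one_pos (Real.rpow_pos_of_pos two_pos _)
  have hcmin1 : min 1 ((2:ℝ) ^ α) ≤ 1 := min_le_left _ _
  have hC3 : (2:ℝ) ≤ 2 / min 1 ((2:ℝ) ^ α) := by
    rw [le_div_iff₀ hcmin]; linarith
  have hN0 : (0:ℝ) < (N:ℝ) := by exact_mod_cast hN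
  by_cases hα1 : α = 1
  · subst hα1
    rw [phi, if_pos rfl]
    have hmax : max (N:ℝ) 1 = (N:ℝ) := max_eq_left (by exact_mod_cast hN)
    rw [hmax]
    have h1 : Real.log (N:ℝ) ≤ Real.log ((N:ℝ)+1) :=
      Real.log_le_log hN0 (by linarith)
    have h2 : Real.log ((N:ℝ)+1) ≤ S 1 N := by
      rw [S]
      have : ∀ i ∈ Finset.range N, ((i:ℝ)+1)⁻¹ = u 1 i := by
        intro i _
        rw [u, ← Real.rpow_neg_one ((i:ℝ)+1)]
      rw [← Finset.sum_congr rfl this]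
      exact log_le_harmonic N
    have hS : 0 ≤ S 1 N := S_nonneg 1 N
    have h3 : Real.log (N:ℝ) ≤ S 1 N := le_trans h1 h2
    have h4 := mul_le_mul_of_nonneg_right hC3 hS
    linarith
  · rw [phi, if_neg hα1]
    -- phi = N ^ (1-α); lower bound S by half the terms
    set c : ℝ := min 1 ((2:ℝ) ^ α) with hc
    have key : ∀ i ∈ Finset.Ico (N/2) N, c * (N:ℝ) ^ (-α) ≤ u α i := by
      intro i hi
      rw [Finset.mem_Ico] at hi
      have hi2 : (N:ℝ)/2 ≤ (i:ℝ) + 1 := by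
        have h2i : N ≤ 2 * (N/2) + 1 := by omega
        have : (N:ℝ) ≤ 2 * ((N/2 : ℕ):ℝ) + 1 := by exact_mod_cast h2i
        have hii : ((N/2:ℕ):ℝ) ≤ (i:ℝ) := by exact_mod_cast hi.1
        linarith
      have hiN : (i:ℝ) + 1 ≤ (N:ℝ) := by exact_mod_cast hi.2
      rw [u]
      rcases le_or_gt 0 α with h0 | h0
      · have h1' : (N:ℝ) ^ (-α) ≤ ((i:ℝ)+1) ^ (-α) :=
          Real.rpow_le_rpow_of_nonpos (by positivity) hiN (by linarith)
        calc c * (N:ℝ)^(-α) ≤ 1 * (N:ℝ)^(-α) := by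
              apply mul_le_mul_of_nonneg_right hcmin1 (Real.rpow_pos_of_pos hN0 _).le
          _ = (N:ℝ)^(-α) := one_mul _
          _ ≤ ((i:ℝ)+1)^(-α) := h1'
      · have h1' : ((N:ℝ)/2) ^ (-α) ≤ ((i:ℝ)+1) ^ (-α) :=
          Real.rpow_le_rpow (by positivity) hi2 (by linarith)
        have h2' : ((N:ℝ)/2) ^ (-α) = (N:ℝ)^(-α) * ((2:ℝ)^α) := by
          rw [Real.div_rpow hN0.le (by norm_num : (0:ℝ) ≤ 2)]
          rw [Real.rpow_neg (by norm_num : (0:ℝ) ≤ 2)]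
          field_simp
        calc c * (N:ℝ)^(-α) ≤ (2:ℝ)^α * (N:ℝ)^(-α) := by
              apply mul_le_mul_of_nonneg_right (min_le_right _ _)
                (Real.rpow_pos_of_pos hN0 _).le
          _ = ((N:ℝ)/2) ^ (-α) := by rw [h2']; ring
          _ ≤ ((i:ℝ)+1)^(-α) := h1'
    have hsum : ((N - N/2 : ℕ):ℝ) * (c * (N:ℝ) ^ (-α)) ≤ S α N := by
      have h1 : ∑ i ∈ Finset.Ico (N/2) N, (c * (N:ℝ)^(-α)) ≤ ∑ i ∈ Finset.Ico (N/2) N, u α i :=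
        Finset.sum_le_sum key
      rw [Finset.sum_const, Nat.card_Ico, nsmul_eq_mul] at h1
      refine le_trans h1 ?_
      rw [S, Finset.range_eq_Ico]
      apply Finset.sum_le_sum_of_subset_of_nonneg
      · exact Finset.Ico_subset_Ico (Nat.zero_le _) le_rfl
      · intro i _ _; exact (u_pos α i).le
    have hhalf : (N:ℝ)/2 ≤ ((N - N/2 : ℕ):ℝ) := by
      have h2i : N/2 * 2 ≤ N := Nat.div_mul_le_self N 2
      have : ((N/2:ℕ):ℝ) ≤ (N:ℝ)/2 := by
        have := Nat.cast_le (α := ℝ).2 h2i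
        push_cast at this
        linarith
      have hle : N/2 ≤ N := Nat.div_le_self N 2
      have : ((N - N/2:ℕ):ℝ) = (N:ℝ) - ((N/2:ℕ):ℝ) := by
        push_cast [hle]
        ring
      linarith [this]
    have hup : (0:ℝ) < (N:ℝ) ^ (-α) := Real.rpow_pos_of_pos hN0 _
    have hlow : (N:ℝ)/2 * (c * (N:ℝ)^(-α)) ≤ S α N := by
      refine le_trans ?_ hsum
      apply mul_le_mul_of_nonneg_right hhalf (by positivity)
    have hNpow : (N:ℝ) ^ (1 - α) = (N:ℝ) * (N:ℝ) ^ (-α) := by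
      rw [show (1:ℝ) - α = 1 + (-α) by ring, Real.rpow_add hN0, Real.rpow_one]
    rw [hNpow, div_mul_eq_mul_div, le_div_iff₀ hcmin]
    nlinarith [hlow]

lemma geom_inverse {z : ℂ} (hz : z ≠ 0) :
    ((X - C z : ℂ[X]) : PowerSeries ℂ) * PowerSeries.mk (fun k => -((z⁻¹)^(k+1))) = 1 := by
  rw [Polynomial.coe_sub, Polynomial.coe_X, Polynomial.coe_C, sub_mul]
  ext n
  cases n with
  | zero =>
    simp only [PowerSeries.coeff_zero_eq_constantCoeff, map_sub, map_mul,
      PowerSeries.constantCoeff_X, PowerSeries.constantCoeff_C, zero_mul,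
      PowerSeries.constantCoeff_mk, map_one, pow_one]
    simp [hz]
  | succ n =>
    rw [map_sub, PowerSeries.coeff_succ_X_mul, PowerSeries.coeff_C_mul,
      PowerSeries.coeff_mk, PowerSeries.coeff_mk, PowerSeries.coeff_one]
    simp only [Nat.succ_ne_zero, if_false]
    have : z * (z⁻¹)^(n+1+1) = (z⁻¹)^(n+1) := by
      rw [pow_succ]
      field_simp
    rw [mul_neg, this]
    ring

lemma exists_bounded_inverse (f : Polynomial ℂ) (hf0 : f ≠ 0)
    (hroots : ∀ z : ℂ, f.eval z = 0 → 1 ≤ ‖z‖ ∧ Polynomial.rootMultiplicity z f = 1) :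
    ∃ (b : ℕ → ℂ) (M : ℝ), (∀ k, ‖b k‖ ≤ M) ∧
      ((f : PowerSeries ℂ) * PowerSeries.mk b = 1) := by
  classical
  have hlc : f.leadingCoeff ≠ 0 := Polynomial.leadingCoeff_ne_zero.2 hf0
  set lc := f.leadingCoeff with hlcdef
  have hnodup : f.roots.Nodup := by
    rw [Multiset.nodup_iff_count_le_one]
    intro a
    rw [Polynomial.count_roots]
    by_cases ha : f.eval a = 0
    · rw [(hroots a ha).2]
    · rw [Polynomial.rootMultiplicity_eq_zero ha]
      exact Nat.zero_le 1
  set R : Finset ℂ := f.roots.toFinset with hRdef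
  have hRval : R.val = f.roots := by
    rw [hRdef, Multiset.toFinset_val, Multiset.dedup_eq_self.2 hnodup]
  have hfact : f = C lc * ∏ z ∈ R, (X - C z) := by
    have h1 := (IsAlgClosed.splits f).eq_prod_roots
    rw [Finset.prod_eq_multiset_prod, hRval]
    exact h1
  have hmemR : ∀ z ∈ R, f.eval z = 0 := by
    intro z hz
    rw [hRdef, Multiset.mem_toFinset] at hz
    exact (Polynomial.mem_roots hf0).1 hz
  have hRz : ∀ z ∈ R, z ≠ 0 := by
    intro z hz
    have h1 := (hroots z (hmemR z hz)).1
    intro h0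
    rw [h0, norm_zero] at h1
    linarith
  rcases Finset.eq_empty_or_nonempty R with hR | hne
  · -- constant case
    have hfc : f = C lc := by rw [hfact, hR, Finset.prod_empty, mul_one]
    refine ⟨fun k => if k = 0 then lc⁻¹ else 0, ‖lc⁻¹‖, ?_, ?_⟩
    · intro k
      by_cases hk : k = 0 <;> simp [hk]
    · have hmk : PowerSeries.mk (fun k => if k = 0 then lc⁻¹ else (0:ℂ))
          = PowerSeries.C (lc⁻¹) := by
        ext n
        rw [PowerSeries.coeff_mk, PowerSeries.coeff_C]
      rw [hmk, hfc, Polynomial.coe_C, ← map_mul, mul_inv_cancel₀ hlc, map_one]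
  · -- nonconstant case: partial fractions via Lagrange interpolation
    set c : ℂ → ℂ := fun z => ∏ w ∈ R.erase z, (z - w)⁻¹ with hcdef
    set g : ℂ → ℕ → ℂ := fun z k => -((z⁻¹)^(k+1)) with hgdef
    set P : ℂ → Polynomial ℂ := fun z => ∏ w ∈ R.erase z, (X - C w) with hPdef
    have hLag : (1 : Polynomial ℂ) = ∑ z ∈ R, C (c z) * P z := by
      have hinj : Set.InjOn id (R : Set ℂ) := fun a _ b _ h => h
      have hdeg : (1 : Polynomial ℂ).degree < R.card := by
        rw [Polynomial.degree_one]
        exact_mod_cast Finset.card_pos.2 hne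
      have h1 := Lagrange.eq_interpolate (v := id) hinj hdeg
      rw [Lagrange.interpolate_apply] at h1
      convert h1 using 1
      apply Finset.sum_congr rfl
      intro z hz
      rw [Polynomial.eval_one, map_one, one_mul, Lagrange.basis]
      simp only [id_eq, hcdef, hPdef, Lagrange.basisDivisor]
      rw [map_prod, ← Finset.prod_mul_distrib]
    -- the candidate power series inverse
    refine ⟨fun k => lc⁻¹ * ∑ z ∈ R, c z * g z k, ‖lc⁻¹‖ * ∑ z ∈ R, ‖c z‖, ?_, ?_⟩
    · intro k
      rw [norm_mul]
      apply mul_le_mul_of_nonneg_left _ (norm_nonneg _)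
      refine le_trans (norm_sum_le _ _) (Finset.sum_le_sum ?_)
      intro z hz
      rw [norm_mul]
      have h1 : ‖g z k‖ ≤ 1 := by
        rw [hgdef]
        simp only [norm_neg, norm_pow, norm_inv]
        have hz1 : 1 ≤ ‖z‖ := (hroots z (hmemR z hz)).1
        have : ‖z‖⁻¹ ≤ 1 := by
          rw [inv_le_one_iff₀]; right; exact hz1
        exact pow_le_one₀ (by positivity) this
      calc ‖c z‖ * ‖g z k‖ ≤ ‖c z‖ * 1 :=
            mul_le_mul_of_nonneg_left h1 (norm_nonneg _)
        _ = ‖c z‖ := mul_one _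
    · have hmk : PowerSeries.mk (fun k => lc⁻¹ * ∑ z ∈ R, c z * g z k)
          = PowerSeries.C lc⁻¹ *
            ∑ z ∈ R, PowerSeries.C (c z) * PowerSeries.mk (g z) := by
        ext n
        rw [PowerSeries.coeff_mk, PowerSeries.coeff_C_mul, map_sum]
        congr 1
        apply Finset.sum_congr rfl
        intro z _
        rw [PowerSeries.coeff_C_mul, PowerSeries.coeff_mk]
      have key : ∀ z ∈ R, (↑f : PowerSeries ℂ) *
          (PowerSeries.C lc⁻¹ * (PowerSeries.C (c z) * PowerSeries.mk (g z)))
          = ↑(C (c z) * P z) := by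
        intro z hz
        have h1 : f = (X - C z) * (C lc * P z) := by
          rw [hfact, ← Finset.mul_prod_erase _ _ hz, hPdef]
          ring
        calc (↑f : PowerSeries ℂ) *
            (PowerSeries.C lc⁻¹ * (PowerSeries.C (c z) * PowerSeries.mk (g z)))
            = (((X - C z : Polynomial ℂ) : PowerSeries ℂ) * PowerSeries.mk (g z)) *
              ((PowerSeries.C lc * PowerSeries.C lc⁻¹) *
                (PowerSeries.C (c z) * ↑(P z))) := by
              rw [h1, Polynomial.coe_mul, Polynomial.coe_mul, Polynomial.coe_C]
              ring
          _ = PowerSeries.C (c z) * ↑(P z) := by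
              rw [hgdef, geom_inverse (hRz z hz), ← map_mul, mul_inv_cancel₀ hlc,
                map_one, one_mul, one_mul]
          _ = ↑(C (c z) * P z) := by rw [Polynomial.coe_mul, Polynomial.coe_C]
      calc (↑f : PowerSeries ℂ) * PowerSeries.mk (fun k => lc⁻¹ * ∑ z ∈ R, c z * g z k)
          = ∑ z ∈ R, (↑f : PowerSeries ℂ) *
              (PowerSeries.C lc⁻¹ * (PowerSeries.C (c z) * PowerSeries.mk (g z))) := by
            rw [hmk, Finset.mul_sum, Finset.mul_sum]
        _ = ∑ z ∈ R, (↑(C (c z) * P z) : PowerSeries ℂ) := Finset.sum_congr rfl key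
        _ = ((↑(∑ z ∈ R, C (c z) * P z) : PowerSeries ℂ)) := by
            rw [← Polynomial.coeToPowerSeries.ringHom_apply, map_sum]
            apply Finset.sum_congr rfl
            intro z _
            rw [Polynomial.coeToPowerSeries.ringHom_apply]
        _ = 1 := by rw [← hLag, Polynomial.coe_one]

end Stmt14Aux

open Stmt14Aux

/-- let α ≤ 1 and f a polynomial of degree t with simple zeros, all outside
the open unit disk. Then for each n > t there is p_n ∈ Poly_n with (p_n f)(0) = 1 and
‖p_n f − 1‖²_α ≤ C/φ_α(n+1), with C = C(f,α), and with ‖p_n f‖_{A(𝕋)} uniformly bounded. -/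
theorem stmt14 (α : ℝ) (hα : α ≤ 1) (f : Polynomial ℂ) (hf0 : f ≠ 0)
    (t : ℕ) (ht : t = f.natDegree)
    (hroots : ∀ z : ℂ, f.eval z = 0 → 1 ≤ ‖z‖ ∧ Polynomial.rootMultiplicity z f = 1) :
    ∃ C B : ℝ, 0 < C ∧ ∀ n : ℕ, t < n →
      ∃ p : Polynomial ℂ, p.natDegree ≤ n ∧
        (p * f).coeff 0 = 1 ∧
        Dnorm2 α (fun k => (p * f - 1).coeff k) ≤ C / phi α ((n : ℝ) + 1) ∧
        (∑' k : ℕ, ‖(p * f).coeff k‖) ≤ B := by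
  classical
  obtain ⟨b, M0, hbM0, hfb⟩ := exists_bounded_inverse f hf0 hroots
  set M : ℝ := max M0 0 with hMdef
  have hM : ∀ k, ‖b k‖ ≤ M := fun k => le_trans (hbM0 k) (le_max_left _ _)
  have hM0 : 0 ≤ M := le_max_right _ _
  have hconv : ∀ m : ℕ, ∑ x ∈ Finset.HasAntidiagonal.antidiagonal m, b x.1 * f.coeff x.2
      = if m = 0 then (1:ℂ) else 0 := by
    intro m
    rw [mul_comm] at hfb
    have h := congrArg (PowerSeries.coeff m) hfb
    rw [PowerSeries.coeff_mul, PowerSeries.coeff_one] at h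
    rw [← h]
    apply Finset.sum_congr rfl
    intro x _
    rw [PowerSeries.coeff_mk, Polynomial.coeff_coe]
  set F : ℝ := ∑ j ∈ Finset.range (t+1), ‖f.coeff j‖ with hFdef
  have hF0 : 0 ≤ F := Finset.sum_nonneg fun j _ => norm_nonneg _
  set K : ℝ := M * F * (t:ℝ) * ((t:ℝ)+1) with hKdef
  have hK0 : 0 ≤ K := by positivity
  set C₂ : ℝ := 1 + (t:ℝ) * max 1 (((t:ℝ)+1) ^ (-α)) with hC2def
  have hC2 : 1 ≤ C₂ := by
    have : (0:ℝ) ≤ (t:ℝ) * max 1 (((t:ℝ)+1) ^ (-α)) := by positivity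
    linarith
  set C₃ : ℝ := 2 / min 1 ((2:ℝ) ^ α) with hC3def
  have hC3 : 0 < C₃ := by
    apply div_pos two_pos
    exact lt_min one_pos (Real.rpow_pos_of_pos two_pos _)
  refine ⟨K^2 * C₂ * C₃ + 1, K * C₂ + 1, by positivity, ?_⟩
  intro n hn
  have hn1 : 1 ≤ n := le_trans (Nat.one_le_iff_ne_zero.2 (by omega)) le_rfl
  have hSpos : 0 < S α (n+1) := S_pos α (n+1) (by omega)
  set w : ℕ → ℝ := fun k => 1 - S α (min k (n+1)) / S α (n+1) with hwdef
  have hw0 : w 0 = 1 := by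
    simp only [hwdef, Nat.min_eq_left (Nat.zero_le _), S_zero, zero_div, sub_zero]
  have hwlarge : ∀ j, n < j → w j = 0 := by
    intro j hj
    simp only [hwdef, Nat.min_eq_right (by omega : n+1 ≤ j), div_self hSpos.ne', sub_self]
  set p : Polynomial ℂ := ∑ k ∈ Finset.range (n+1), Polynomial.monomial k ((w k : ℂ) * b k)
    with hpdef
  have hpcoeff : ∀ j, p.coeff j = (w j : ℂ) * b j := by
    intro j
    rw [hpdef, Polynomial.finset_sum_coeff]
    simp only [Polynomial.coeff_monomial]
    by_cases hj : j < n + 1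
    · rw [Finset.sum_ite_eq' (Finset.range (n+1)) j]
      simp [Finset.mem_range.2 hj]
    · rw [Finset.sum_eq_zero, hwlarge j (by omega)]
      · simp
      · intro k hk
        rw [Finset.mem_range] at hk
        rw [if_neg (by omega)]
  have hdeg : p.natDegree ≤ n := by
    apply Polynomial.natDegree_le_iff_coeff_eq_zero.2
    intro m hm
    rw [hpcoeff, hwlarge m hm]
    simp
  -- the error term
  set D : ℕ → ℂ := fun m => ∑ x ∈ Finset.HasAntidiagonal.antidiagonal m,
      ((w x.1 - w m : ℝ) : ℂ) * (b x.1 * f.coeff x.2) with hDdef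
  have hPF : ∀ m, (p * f).coeff m = D m + (if m = 0 then 1 else 0) := by
    intro m
    rw [Polynomial.coeff_mul]
    have hterm : ∀ x ∈ Finset.HasAntidiagonal.antidiagonal m, p.coeff x.1 * f.coeff x.2
        = ((w x.1 - w m : ℝ) : ℂ) * (b x.1 * f.coeff x.2)
          + (w m : ℂ) * (b x.1 * f.coeff x.2) := by
      intro x _
      rw [hpcoeff]
      push_cast
      ring
    rw [Finset.sum_congr rfl hterm, Finset.sum_add_distrib, ← Finset.mul_sum, hconv m]
    rw [hDdef]
    congr 1
    by_cases hm : m = 0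
    · simp [hm, hw0]
    · simp [hm]
  have hc : ∀ m, (p * f - 1).coeff m = D m := by
    intro m
    rw [Polynomial.coeff_sub, hPF m, Polynomial.coeff_one]
    ring
  -- weight difference bound
  have hwdiff : ∀ k m : ℕ, k ≤ m → m ≤ k + t →
      |w k - w m| ≤ (t:ℝ) * ((t:ℝ)+1) * u α m / S α (n+1) := by
    intro k m h1 h2
    set a := min k (n+1) with hadef
    set bb := min m (n+1) with hbbdef
    have hab : a ≤ bb := by omega
    have hwkm : w k - w m = (S α bb - S α a) / S α (n+1) := by
      simp only [hwdef]
      field_simp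
      rw [hadef, hbbdef]
      ring
    have hterm : ∀ i ∈ Finset.Ico a bb, u α i ≤ ((t:ℝ)+1) * u α m := by
      intro i hi
      rw [Finset.mem_Ico] at hi
      have him : i ≤ m := by omega
      have hmi : m ≤ i + t := by omega
      exact u_ratio_le hα t him hmi
    have hcard : (Finset.Ico a bb).card ≤ t := by
      rw [Nat.card_Ico]
      omega
    have hsum : S α bb - S α a ≤ (t:ℝ) * (((t:ℝ)+1) * u α m) := by
      rw [S_sub α hab]
      calc ∑ i ∈ Finset.Ico a bb, u α i
          ≤ (Finset.Ico a bb).card • (((t:ℝ)+1) * u α m) :=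
            Finset.sum_le_card_nsmul _ _ _ hterm
        _ = ((Finset.Ico a bb).card : ℝ) * (((t:ℝ)+1) * u α m) := nsmul_eq_mul _ _
        _ ≤ (t:ℝ) * (((t:ℝ)+1) * u α m) := by
            apply mul_le_mul_of_nonneg_right _ (mul_nonneg (by positivity) (u_pos α m).le)
            exact_mod_cast hcard
    have hnn : 0 ≤ S α bb - S α a := by linarith [S_mono α hab]
    rw [hwkm, abs_div, abs_of_nonneg hnn, abs_of_pos hSpos]
    rw [div_le_div_iff_of_pos_right hSpos]
    linarith [hsum]
  -- bound on the error coefficients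
  have hDbound : ∀ m, ‖D m‖ ≤ K * u α m / S α (n+1) := by
    intro m
    refine le_trans (norm_sum_le _ _) ?_
    have hterm : ∀ x ∈ Finset.HasAntidiagonal.antidiagonal m,
        ‖((w x.1 - w m : ℝ) : ℂ) * (b x.1 * f.coeff x.2)‖
          ≤ ((t:ℝ) * ((t:ℝ)+1) * u α m / S α (n+1)) * (M * ‖f.coeff x.2‖) := by
      intro x hx
      rw [Finset.HasAntidiagonal.mem_antidiagonal] at hx
      by_cases hj : x.2 ≤ t
      · have h1 : x.1 ≤ m := by omega
        have h2 : m ≤ x.1 + t := by omega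
        rw [norm_mul, norm_mul, Complex.norm_real, Real.norm_eq_abs]
        apply mul_le_mul (hwdiff _ _ h1 h2)
          (mul_le_mul_of_nonneg_right (hM x.1) (norm_nonneg _))
          (mul_nonneg (norm_nonneg _) (norm_nonneg _)) ?_
        have h3 : 0 ≤ (t:ℝ) * ((t:ℝ)+1) * u α m := by
          apply mul_nonneg (by positivity) (u_pos α m).le
        positivity
      · have hz : f.coeff x.2 = 0 := by
          apply Polynomial.coeff_eq_zero_of_natDegree_lt
          omega
        rw [hz]
        simp only [mul_zero, norm_zero, norm_mul]
        positivity
    refine le_trans (Finset.sum_le_sum hterm) ?_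
    rw [← Finset.mul_sum, ← Finset.mul_sum]
    have hsumf : ∑ x ∈ Finset.HasAntidiagonal.antidiagonal m, ‖f.coeff x.2‖ ≤ F := by
      rw [Finset.Nat.sum_antidiagonal_eq_sum_range_succ_mk]
      have hrefl := Finset.sum_range_reflect (fun j => ‖f.coeff j‖) (m+1)
      simp only [Nat.add_sub_cancel] at hrefl
      rw [hrefl]
      rcases le_or_gt m t with hmt | hmt
      · apply Finset.sum_le_sum_of_subset_of_nonneg
        · exact Finset.range_subset_range.2 (by omega)
        · intro j _ _; exact norm_nonneg _
      · rw [hFdef]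
        apply le_of_eq
        symm
        apply Finset.sum_subset (Finset.range_subset_range.2 (by omega))
        intro j _ hj
        rw [Finset.mem_range, not_lt] at hj
        rw [Polynomial.coeff_eq_zero_of_natDegree_lt (by omega), norm_zero]
      -- note: hrefl turns `‖f.coeff (m - k)‖` sums around
    calc ((t:ℝ) * ((t:ℝ)+1) * u α m / S α (n+1)) *
          (M * ∑ x ∈ Finset.HasAntidiagonal.antidiagonal m, ‖f.coeff x.2‖)
        ≤ ((t:ℝ) * ((t:ℝ)+1) * u α m / S α (n+1)) * (M * F) := by
          apply mul_le_mul_of_nonneg_left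
            (mul_le_mul_of_nonneg_left hsumf hM0)
          have h3 : 0 ≤ (t:ℝ) * ((t:ℝ)+1) * u α m := by
            apply mul_nonneg (by positivity) (u_pos α m).le
          positivity
      _ = K * u α m / S α (n+1) := by rw [hKdef]; ring
  -- power computation
  have hupow : ∀ k : ℕ, ((k:ℝ)+1) ^ α * (u α k)^2 = u α k := by
    intro k
    have hk0 : (0:ℝ) < (k:ℝ)+1 := by positivity
    rw [u, sq, ← Real.rpow_add hk0, ← Real.rpow_add hk0]
    congr 1
    ring
  -- S (n+t+1) ≤ C₂ * S (n+1)
  have hS2 : S α (n+t+1) ≤ C₂ * S α (n+1) := by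
    have hsub := S_sub α (by omega : n+1 ≤ n+t+1)
    have hterm : ∀ i ∈ Finset.Ico (n+1) (n+t+1),
        u α i ≤ max 1 (((t:ℝ)+1) ^ (-α)) * S α (n+1) := by
      intro i hi
      rw [Finset.mem_Ico] at hi
      calc u α i ≤ max 1 (((t:ℝ)+1) ^ (-α)) * u α n :=
            u_ratio_le' α t (by omega) (by omega)
        _ ≤ max 1 (((t:ℝ)+1) ^ (-α)) * S α (n+1) := by
            apply mul_le_mul_of_nonneg_left (le_single_S α (by omega))
              (le_trans zero_le_one (le_max_left _ _))
    have h2 : S α (n+t+1) - S α (n+1)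
        ≤ (t:ℝ) * (max 1 (((t:ℝ)+1) ^ (-α)) * S α (n+1)) := by
      rw [hsub]
      calc ∑ i ∈ Finset.Ico (n+1) (n+t+1), u α i
          ≤ (Finset.Ico (n+1) (n+t+1)).card •
              (max 1 (((t:ℝ)+1) ^ (-α)) * S α (n+1)) :=
            Finset.sum_le_card_nsmul _ _ _ hterm
        _ = ((Finset.Ico (n+1) (n+t+1)).card : ℝ) *
              (max 1 (((t:ℝ)+1) ^ (-α)) * S α (n+1)) := nsmul_eq_mul _ _
        _ = (t:ℝ) * (max 1 (((t:ℝ)+1) ^ (-α)) * S α (n+1)) := by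
            rw [Nat.card_Ico]
            congr 2
            omega
    rw [hC2def]
    nlinarith [h2]
  -- phi bounds
  have hphiS : phi α ((n:ℝ)+1) ≤ C₃ * S α (n+1) := by
    have := phi_le_S hα (n+1) (by omega)
    push_cast at this
    rw [hC3def]
    exact this
  have hphipos : 0 < phi α ((n:ℝ)+1) := by
    rw [phi]
    by_cases hα1 : α = 1
    · rw [if_pos hα1]
      have hmax : max ((n:ℝ)+1) 1 = (n:ℝ)+1 := by
        apply max_eq_left
        have : (1:ℝ) ≤ (n:ℝ) := by exact_mod_cast hn1
        linarith
      rw [hmax]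
      apply Real.log_pos
      have : (1:ℝ) ≤ (n:ℝ) := by exact_mod_cast hn1
      linarith
    · rw [if_neg hα1]
      positivity
  -- finite support of the coefficients
  have hnd : (p * f).natDegree ≤ n + t := by
    refine le_trans (Polynomial.natDegree_mul_le) ?_
    omega
  have hzero1 : ∀ m, n + t < m → (p * f).coeff m = 0 := by
    intro m hm
    exact Polynomial.coeff_eq_zero_of_natDegree_lt (by omega)
  have hzero2 : ∀ m, n + t < m → (p * f - 1).coeff m = 0 := by
    intro m hm
    apply Polynomial.coeff_eq_zero_of_natDegree_lt
    refine lt_of_le_of_lt (le_trans (Polynomial.natDegree_sub_le _ _) ?_) hm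
    rw [Polynomial.natDegree_one, max_eq_left (Nat.zero_le _)]
    exact hnd
  refine ⟨p, hdeg, ?_, ?_, ?_⟩
  · -- (p f)(0) = 1
    rw [hPF 0, if_pos rfl]
    have : D 0 = 0 := by
      rw [hDdef]
      apply Finset.sum_eq_zero
      intro x hx
      rw [Finset.HasAntidiagonal.mem_antidiagonal] at hx
      have h1 : x.1 = 0 := by omega
      rw [h1, sub_self]
      simp
    rw [this, zero_add]
  · -- Dnorm2 bound
    have htsum : Dnorm2 α (fun k => (p * f - 1).coeff k)
        = ∑ k ∈ Finset.range (n+t+1), ((k:ℝ)+1) ^ α * ‖(p * f - 1).coeff k‖^2 := by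
      rw [Dnorm2]
      apply tsum_eq_sum
      intro k hk
      rw [Finset.mem_range, not_lt] at hk
      rw [hzero2 k (by omega), norm_zero]
      ring
    rw [htsum]
    have hterm : ∀ k ∈ Finset.range (n+t+1),
        ((k:ℝ)+1) ^ α * ‖(p * f - 1).coeff k‖^2
          ≤ (K^2 / (S α (n+1))^2) * u α k := by
      intro k _
      rw [hc k]
      have h1 : ‖D k‖^2 ≤ (K * u α k / S α (n+1))^2 := by
        apply sq_le_sq'
        · have := norm_nonneg (D k)
          have h2 := hDbound k
          have h3 : 0 ≤ K * u α k / S α (n+1) := by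
            apply div_nonneg (mul_nonneg hK0 (u_pos α k).le) hSpos.le
          linarith
        · exact hDbound k
      have hpos : (0:ℝ) ≤ ((k:ℝ)+1) ^ α := (Real.rpow_pos_of_pos (by positivity) _).le
      calc ((k:ℝ)+1) ^ α * ‖D k‖^2 ≤ ((k:ℝ)+1) ^ α * (K * u α k / S α (n+1))^2 :=
            mul_le_mul_of_nonneg_left h1 hpos
        _ = (K^2 / (S α (n+1))^2) * (((k:ℝ)+1) ^ α * (u α k)^2) := by ring
        _ = (K^2 / (S α (n+1))^2) * u α k := by rw [hupow k]
    refine le_trans (Finset.sum_le_sum hterm) ?_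
    rw [← Finset.mul_sum]
    have hSn : ∑ k ∈ Finset.range (n+t+1), u α k = S α (n+t+1) := rfl
    rw [hSn]
    -- K²/S² * S(n+t+1) ≤ K² C₂ / S ≤ K² C₂ C₃ / phi ≤ C / phi
    have step1 : K^2 / (S α (n+1))^2 * S α (n+t+1) ≤ K^2 * C₂ / S α (n+1) := by
      rw [div_mul_eq_mul_div, div_le_div_iff₀ (by positivity) hSpos]
      calc K^2 * S α (n+t+1) * S α (n+1) ≤ K^2 * (C₂ * S α (n+1)) * S α (n+1) := by
            apply mul_le_mul_of_nonneg_right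
              (mul_le_mul_of_nonneg_left hS2 (by positivity)) hSpos.le
        _ = K^2 * C₂ / 1 * (S α (n+1))^2 / 1 := by ring
        _ = K^2 * C₂ * (S α (n+1))^2 := by ring
    have step2 : K^2 * C₂ / S α (n+1) ≤ K^2 * C₂ * C₃ / phi α ((n:ℝ)+1) := by
      rw [div_le_div_iff₀ hSpos hphipos]
      calc K^2 * C₂ * phi α ((n:ℝ)+1) ≤ K^2 * C₂ * (C₃ * S α (n+1)) := by
            apply mul_le_mul_of_nonneg_left hphiS (by positivity)
        _ = K^2 * C₂ * C₃ * S α (n+1) := by ring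
    have step3 : K^2 * C₂ * C₃ / phi α ((n:ℝ)+1)
        ≤ (K^2 * C₂ * C₃ + 1) / phi α ((n:ℝ)+1) := by
      rw [div_le_div_iff₀ hphipos hphipos]
      nlinarith [hphipos]
    linarith [step1, step2, step3]
  · -- Wiener norm bound
    have htsum : (∑' k : ℕ, ‖(p * f).coeff k‖)
        = ∑ k ∈ Finset.range (n+t+1), ‖(p * f).coeff k‖ := by
      apply tsum_eq_sum
      intro k hk
      rw [Finset.mem_range, not_lt] at hk
      rw [hzero1 k (by omega), norm_zero]
    rw [htsum]
    have hterm : ∀ k ∈ Finset.range (n+t+1),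
        ‖(p * f).coeff k‖ ≤ K * u α k / S α (n+1) + (if k = 0 then (1:ℝ) else 0) := by
      intro k _
      rw [hPF k]
      refine le_trans (norm_add_le _ _) ?_
      apply add_le_add (hDbound k)
      by_cases hk : k = 0 <;> simp [hk]
    refine le_trans (Finset.sum_le_sum hterm) ?_
    rw [Finset.sum_add_distrib]
    have h1 : ∑ k ∈ Finset.range (n+t+1), (if k = 0 then (1:ℝ) else 0) = 1 := by
      rw [Finset.sum_ite_eq' (Finset.range (n+t+1)) 0 (fun _ => (1:ℝ))]
      simp
    rw [h1]
    have h2 : ∑ k ∈ Finset.range (n+t+1), K * u α k / S α (n+1)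
        = (K * S α (n+t+1)) / S α (n+1) := by
      rw [← Finset.sum_div, ← Finset.mul_sum]
      rfl
    have h3 : (K * S α (n+t+1)) / S α (n+1) ≤ K * C₂ := by
      rw [div_le_iff₀ hSpos]
      calc K * S α (n+t+1) ≤ K * (C₂ * S α (n+1)) := mul_le_mul_of_nonneg_left hS2 hK0
        _ = K * C₂ * S α (n+1) := by ring
    rw [h2]
    linarith
end

section
/- (Control Lemma) Let α ≤ 1 and f(z) = ∑_{i=0}^t a_i z^i a polynomial with simple zeros outside the open unit disk, and 1/f(z) = ∑_{i≥0} b_i z^i with both sequences bounded and ∑_{j=0}^k b_j a_{k-j} = 0 for k ≥ 1. Then for k > t there is a constant C = C(α, f) with |∑_{i=0}^k φ_α(i) b_i a_{k−i}| ≤ C/(k+1)^α, where φ_α(s) = s^{1−α} if α < 1 and log⁺ s if α = 1. -/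
lemma phi_one (s : ℝ) : phi 1 s = Real.log (max s 1) := if_pos rfl

lemma phi_ne {α : ℝ} (hA : α ≠ 1) (s : ℝ) : phi α s = s ^ (1 - α) := if_neg hA

set_option maxHeartbeats 1000000 in
/-- Key mean-value-type estimate: for k > t and k - t ≤ i ≤ k,
`0 ≤ phi α k - phi α i ≤ D / (k+1)^α`. -/
lemma phi_diff_bound (α : ℝ) (hα : α ≤ 1) (t : ℕ) :
    ∃ D : ℝ, 0 < D ∧ ∀ i k : ℕ, t < k → k - t ≤ i → i ≤ k →
      0 ≤ phi α k - phi α i ∧ phi α k - phi α i ≤ D / ((k : ℝ) + 1) ^ α := by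
  refine ⟨(|1 - α| + 1) * ((t : ℝ) + 1) * ((t : ℝ) + 2), by positivity, ?_⟩
  intro i k hk hki hik
  have hi1 : 1 ≤ i := by omega
  have hiR : (1 : ℝ) ≤ (i : ℝ) := by exact_mod_cast hi1
  have hikR : (i : ℝ) ≤ (k : ℝ) := by exact_mod_cast hik
  have hktR : (k : ℝ) - (t : ℝ) ≤ (i : ℝ) := by
    have : k - t ≤ i := hki
    have h1 : (((k - t : ℕ)) : ℝ) ≤ (i : ℝ) := by exact_mod_cast this
    have h2 : (k : ℝ) - (t : ℝ) ≤ ((k - t : ℕ) : ℝ) := by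
      rw [Nat.cast_sub (by omega)]
    linarith
  have hkt1 : (t : ℝ) + 1 ≤ (k : ℝ) := by exact_mod_cast hk
  have hktpos : (0 : ℝ) < (k : ℝ) - (t : ℝ) := by linarith
  have hkey : (k : ℝ) + 1 ≤ ((t : ℝ) + 2) * ((k : ℝ) - (t : ℝ)) := by nlinarith
  have hk1pos : (0 : ℝ) < (k : ℝ) + 1 := by linarith
  by_cases hA : α = 1
  · -- logarithmic case
    subst hA
    rw [phi_one, phi_one]
    have hmi : max (i : ℝ) 1 = (i : ℝ) := max_eq_left hiR
    have hmk : max (k : ℝ) 1 = (k : ℝ) := max_eq_left (le_trans hiR hikR)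
    rw [hmi, hmk]
    have hipos : (0 : ℝ) < i := by linarith
    have hkpos : (0 : ℝ) < k := by linarith
    constructor
    · have := Real.log_le_log hipos hikR
      linarith
    · have hlog : Real.log (k : ℝ) - Real.log (i : ℝ) ≤ (k : ℝ) / i - 1 := by
        rw [← Real.log_div (by positivity) (by positivity)]
        exact Real.log_le_sub_one_of_pos (by positivity)
      have h2 : (k : ℝ) / i - 1 = ((k : ℝ) - i) / i := by field_simp
      have h3 : ((k : ℝ) - i) / i ≤ (t : ℝ) / ((k : ℝ) - t) := by
        apply div_le_div₀ (by positivity) (by linarith) hktpos hktR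
      have h4 : (t : ℝ) / ((k : ℝ) - t) ≤
          (|1 - (1:ℝ)| + 1) * ((t : ℝ) + 1) * ((t : ℝ) + 2) / ((k : ℝ) + 1) := by
        rw [div_le_div_iff₀ hktpos hk1pos]
        simp only [sub_self, abs_zero, zero_add, one_mul]
        nlinarith
      rw [Real.rpow_one]
      linarith
  · -- power case: phi α s = s ^ (1 - α)
    have hA' : α < 1 := lt_of_le_of_ne hα hA
    set p : ℝ := 1 - α with hp
    have hppos : 0 < p := by rw [hp]; linarith
    rw [phi_ne hA, phi_ne hA, ← hp]
    have hknn : (0 : ℝ) ≤ (k : ℝ) := by linarith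
    have hinn : (0 : ℝ) ≤ (i : ℝ) := by linarith
    have hmono : (i : ℝ) ^ p ≤ (k : ℝ) ^ p :=
      Real.rpow_le_rpow hinn hikR hppos.le
    refine ⟨by linarith, ?_⟩
    have hipos : (0 : ℝ) < i := by linarith
    have habs : |1 - α| = p := abs_of_pos hppos
    -- main estimate: k^p - i^p ≤ p * t * (k+1)^(p-1) * (t+2)
    have hmain : (k : ℝ) ^ p - (i : ℝ) ^ p ≤ p * (t : ℝ) * ((t : ℝ) + 2) * ((k : ℝ) + 1) ^ (p - 1) := by
      by_cases hα0 : 0 ≤ α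
      · -- p ≤ 1, use concave Bernoulli
        have hp1 : p ≤ 1 := by rw [hp]; linarith
        have hs : (0 : ℝ) ≤ ((k : ℝ) - i) / i :=
          div_nonneg (by linarith) (by positivity)
        have hbern := rpow_one_add_le_one_add_mul_self (s := ((k : ℝ) - i) / i)
          (by linarith) hppos.le hp1
        have h1 : (1 : ℝ) + ((k : ℝ) - i) / i = (k : ℝ) / i := by field_simp; ring
        rw [h1] at hbern
        -- (k/i)^p ≤ 1 + p * (k-i)/i
        have h2 : (k : ℝ) ^ p ≤ (i : ℝ) ^ p * (1 + p * (((k : ℝ) - i) / i)) := by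
          have h3 : (k : ℝ) ^ p = (i : ℝ) ^ p * ((k : ℝ) / i) ^ p := by
            rw [← Real.mul_rpow hinn (by positivity)]
            congr 1; field_simp
          rw [h3]
          exact mul_le_mul_of_nonneg_left hbern (by positivity)
        have h4 : (i : ℝ) ^ p * (1 + p * (((k : ℝ) - i) / i))
            = (i : ℝ) ^ p + p * ((k : ℝ) - i) * (i : ℝ) ^ (p - 1) := by
          have : (i : ℝ) ^ (p - 1) = (i : ℝ) ^ p / i := by
            rw [Real.rpow_sub hipos, Real.rpow_one]
          rw [this]; field_simp
        rw [h4] at h2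
        have h5 : (k : ℝ) ^ p - (i : ℝ) ^ p ≤ p * ((k : ℝ) - i) * (i : ℝ) ^ (p - 1) := by
          linarith
        have h6 : (i : ℝ) ^ (p - 1) ≤ ((k : ℝ) - t) ^ (p - 1) :=
          Real.rpow_le_rpow_of_nonpos hktpos hktR (by linarith)
        have h7 : ((k : ℝ) - t) ^ (p - 1) ≤ ((t : ℝ) + 2) ^ (1 - p) * ((k : ℝ) + 1) ^ (p - 1) := by
          have h8 : ((k : ℝ) + 1) ^ (p - 1) ≥ (((t : ℝ) + 2) * ((k : ℝ) - t)) ^ (p - 1) :=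
            Real.rpow_le_rpow_of_nonpos hk1pos hkey (by linarith)
          have h9 : (((t : ℝ) + 2) * ((k : ℝ) - t)) ^ (p - 1)
              = ((t : ℝ) + 2) ^ (p - 1) * ((k : ℝ) - t) ^ (p - 1) :=
            Real.mul_rpow (by positivity) (by positivity)
          rw [h9] at h8
          have h10 : ((k : ℝ) - t) ^ (p - 1)
              = ((t : ℝ) + 2) ^ (1 - p) * (((t : ℝ) + 2) ^ (p - 1) * ((k : ℝ) - t) ^ (p - 1)) := by
            rw [← mul_assoc, ← Real.rpow_add (by positivity)]
            norm_num
          rw [h10]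
          exact mul_le_mul_of_nonneg_left h8 (by positivity)
        have h11 : ((t : ℝ) + 2) ^ (1 - p) ≤ (t : ℝ) + 2 := by
          calc ((t : ℝ) + 2) ^ (1 - p) ≤ ((t : ℝ) + 2) ^ (1 : ℝ) :=
                Real.rpow_le_rpow_of_exponent_le (by linarith) (by linarith)
            _ = (t : ℝ) + 2 := Real.rpow_one _
        have hkisub : (k : ℝ) - i ≤ (t : ℝ) := by linarith
        have hknn1 : (0 : ℝ) ≤ ((k : ℝ) + 1) ^ (p - 1) := by positivity
        calc (k : ℝ) ^ p - (i : ℝ) ^ p ≤ p * ((k : ℝ) - i) * (i : ℝ) ^ (p - 1) := h5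
          _ ≤ p * (t : ℝ) * ((k : ℝ) - t) ^ (p - 1) := by
              apply mul_le_mul (by nlinarith) h6 (by positivity) (by positivity)
          _ ≤ p * (t : ℝ) * (((t : ℝ) + 2) ^ (1 - p) * ((k : ℝ) + 1) ^ (p - 1)) := by
              apply mul_le_mul_of_nonneg_left h7 (by positivity)
          _ ≤ p * (t : ℝ) * (((t : ℝ) + 2) * ((k : ℝ) + 1) ^ (p - 1)) := by
              apply mul_le_mul_of_nonneg_left
                (mul_le_mul_of_nonneg_right h11 hknn1) (by positivity)
          _ = p * (t : ℝ) * ((t : ℝ) + 2) * ((k : ℝ) + 1) ^ (p - 1) := by ring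
      · -- p > 1, use convex Bernoulli
        push_neg at hα0
        have hp1 : 1 ≤ p := by rw [hp]; linarith
        have hkpos : (0 : ℝ) < k := by linarith
        have hbern := one_add_mul_self_le_rpow_one_add
          (s := ((i : ℝ) - k) / k) (by
            rw [le_div_iff₀ hkpos]
            linarith) hp1
        have h1 : (1 : ℝ) + ((i : ℝ) - k) / k = (i : ℝ) / k := by field_simp; ring
        rw [h1] at hbern
        have h2 : (k : ℝ) ^ p * (1 + p * (((i : ℝ) - k) / k)) ≤ (i : ℝ) ^ p := by
          have h3 : (i : ℝ) ^ p = (k : ℝ) ^ p * ((i : ℝ) / k) ^ p := by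
            rw [← Real.mul_rpow hknn (by positivity)]
            congr 1; field_simp
          rw [h3]
          exact mul_le_mul_of_nonneg_left hbern (by positivity)
        have h4 : (k : ℝ) ^ p * (1 + p * (((i : ℝ) - k) / k))
            = (k : ℝ) ^ p - p * ((k : ℝ) - i) * (k : ℝ) ^ (p - 1) := by
          have he : (k : ℝ) ^ (p - 1) = (k : ℝ) ^ p / k := by
            rw [Real.rpow_sub hkpos, Real.rpow_one]
          rw [he]
          have hk0 : (k : ℝ) ≠ 0 := ne_of_gt hkpos
          field_simp
          ring
        rw [h4] at h2
        have h5 : (k : ℝ) ^ p - (i : ℝ) ^ p ≤ p * ((k : ℝ) - i) * (k : ℝ) ^ (p - 1) := by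
          linarith
        have h6 : (k : ℝ) ^ (p - 1) ≤ ((k : ℝ) + 1) ^ (p - 1) :=
          Real.rpow_le_rpow hknn (by linarith) (by linarith)
        have hkisub : (k : ℝ) - i ≤ (t : ℝ) := by linarith
        calc (k : ℝ) ^ p - (i : ℝ) ^ p ≤ p * ((k : ℝ) - i) * (k : ℝ) ^ (p - 1) := h5
          _ ≤ p * (t : ℝ) * ((k : ℝ) + 1) ^ (p - 1) := by
              apply mul_le_mul (by nlinarith) h6 (by positivity) (by positivity)
          _ ≤ p * (t : ℝ) * ((t : ℝ) + 2) * ((k : ℝ) + 1) ^ (p - 1) := by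
              set Q : ℝ := ((k : ℝ) + 1) ^ (p - 1) with hQ
              have hQ0 : 0 ≤ Q := Real.rpow_nonneg (le_of_lt hk1pos) (p - 1)
              nlinarith [mul_nonneg (mul_nonneg hppos.le (Nat.cast_nonneg (α := ℝ) t)) hQ0]
    -- conclude
    have hD : p * (t : ℝ) * ((t : ℝ) + 2) ≤ (|1 - α| + 1) * ((t : ℝ) + 1) * ((t : ℝ) + 2) := by
      rw [habs]
      nlinarith [hppos.le, Nat.cast_nonneg (α := ℝ) t]
    have hpow : ((k : ℝ) + 1) ^ (p - 1) = 1 / ((k : ℝ) + 1) ^ α := by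
      have : p - 1 = -α := by simp [hp]
      rw [this, Real.rpow_neg hk1pos.le, one_div]
    calc (k : ℝ) ^ p - (i : ℝ) ^ p
        ≤ p * (t : ℝ) * ((t : ℝ) + 2) * ((k : ℝ) + 1) ^ (p - 1) := hmain
      _ ≤ (|1 - α| + 1) * ((t : ℝ) + 1) * ((t : ℝ) + 2) * ((k : ℝ) + 1) ^ (p - 1) :=
          mul_le_mul_of_nonneg_right hD (by positivity)
      _ = (|1 - α| + 1) * ((t : ℝ) + 1) * ((t : ℝ) + 2) / ((k : ℝ) + 1) ^ α := by
          rw [hpow]; ring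

/-- Control Lemma: let α ≤ 1, f(z) = ∑_{i=0}^t a_i z^i a polynomial with
simple zeros outside the open unit disk, and 1/f(z) = ∑ b_i z^i (so that b is bounded,
b_0 a_0 = 1 and ∑_{j=0}^k b_j a_{k-j} = 0 for k ≥ 1). Then there is C = C(α,f) such that
for k > t, |∑_{i=0}^k φ_α(i) b_i a_{k−i}| ≤ C/(k+1)^α. -/
theorem stmt15 (α : ℝ) (hα : α ≤ 1) (f : Polynomial ℂ) (hf0 : f ≠ 0)
    (t : ℕ) (ht : t = f.natDegree)
    (hroots : ∀ z : ℂ, f.eval z = 0 → 1 ≤ ‖z‖ ∧ Polynomial.rootMultiplicity z f = 1)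
    (b : ℕ → ℂ) (hb : ∃ Mb : ℝ, ∀ i : ℕ, ‖b i‖ ≤ Mb)
    (hinv0 : b 0 * f.coeff 0 = 1)
    (hconv : ∀ k : ℕ, 1 ≤ k → ∑ j ∈ Finset.range (k + 1), b j * f.coeff (k - j) = 0) :
    ∃ C : ℝ, 0 < C ∧ ∀ k : ℕ, t < k →
      ‖∑ i ∈ Finset.range (k + 1), ((phi α (i : ℝ) : ℝ) : ℂ) * b i * f.coeff (k - i)‖
        ≤ C / ((k : ℝ) + 1) ^ α := by
  obtain ⟨Mb, hMb⟩ := hb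
  set Mb' : ℝ := max Mb 1 with hMb'def
  have hMb'pos : 0 < Mb' := lt_of_lt_of_le one_pos (le_max_right _ _)
  have hMb' : ∀ i : ℕ, ‖b i‖ ≤ Mb' := fun i => (hMb i).trans (le_max_left _ _)
  set Ma : ℝ := (∑ j ∈ Finset.range (t + 1), ‖f.coeff j‖) + 1 with hMadef
  have hMapos : 0 < Ma := by
    have : 0 ≤ ∑ j ∈ Finset.range (t + 1), ‖f.coeff j‖ :=
      Finset.sum_nonneg fun _ _ => norm_nonneg _
    linarith
  have hMa : ∀ j : ℕ, ‖f.coeff j‖ ≤ Ma := by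
    intro j
    by_cases hj : j ≤ t
    · have hmem : j ∈ Finset.range (t + 1) := Finset.mem_range.mpr (by omega)
      have := Finset.single_le_sum (f := fun j => ‖f.coeff j‖)
        (fun _ _ => norm_nonneg _) hmem
      linarith
    · have : f.coeff j = 0 := Polynomial.coeff_eq_zero_of_natDegree_lt (by omega)
      simp [this, le_of_lt hMapos]
  obtain ⟨D, hDpos, hD⟩ := phi_diff_bound α hα t
  refine ⟨((t : ℝ) + 1) * D * Mb' * Ma, by positivity, ?_⟩
  intro k hk
  have hk1pos : (0 : ℝ) < ((k : ℝ) + 1) ^ α := by positivity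
  -- rewrite the sum using the cancellation identity
  have hzero : ∑ i ∈ Finset.range (k + 1),
      ((phi α (k : ℝ) : ℝ) : ℂ) * (b i * f.coeff (k - i)) = 0 := by
    rw [← Finset.mul_sum, hconv k (by omega), mul_zero]
  have hrw : ∑ i ∈ Finset.range (k + 1), ((phi α (i : ℝ) : ℝ) : ℂ) * b i * f.coeff (k - i)
      = ∑ i ∈ Finset.range (k + 1),
        ((phi α (i : ℝ) - phi α (k : ℝ) : ℝ) : ℂ) * (b i * f.coeff (k - i)) := by
    rw [eq_comm, ← sub_zero (∑ i ∈ Finset.range (k + 1),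
      ((phi α (i : ℝ) : ℝ) : ℂ) * b i * f.coeff (k - i))]
    rw [← hzero, ← Finset.sum_sub_distrib]
    apply Finset.sum_congr rfl
    intro i _
    push_cast
    ring
  rw [hrw]
  -- restrict to the interval [k-t, k]
  have hsub : Finset.Icc (k - t) k ⊆ Finset.range (k + 1) := by
    intro i hi
    rw [Finset.mem_Icc] at hi
    rw [Finset.mem_range]
    omega
  have hres : ∑ i ∈ Finset.range (k + 1),
      ((phi α (i : ℝ) - phi α (k : ℝ) : ℝ) : ℂ) * (b i * f.coeff (k - i))
      = ∑ i ∈ Finset.Icc (k - t) k,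
        ((phi α (i : ℝ) - phi α (k : ℝ) : ℝ) : ℂ) * (b i * f.coeff (k - i)) := by
    rw [eq_comm]
    apply Finset.sum_subset hsub
    intro i hi hni
    rw [Finset.mem_range] at hi
    rw [Finset.mem_Icc] at hni
    push_neg at hni
    have hilt : i < k - t := by
      by_contra h
      exact absurd (hni (by omega)) (by omega)
    have hcz : f.coeff (k - i) = 0 :=
      Polynomial.coeff_eq_zero_of_natDegree_lt (by omega)
    simp [hcz]
  rw [hres]
  calc ‖∑ i ∈ Finset.Icc (k - t) k,
        ((phi α (i : ℝ) - phi α (k : ℝ) : ℝ) : ℂ) * (b i * f.coeff (k - i))‖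
      ≤ ∑ i ∈ Finset.Icc (k - t) k,
        ‖((phi α (i : ℝ) - phi α (k : ℝ) : ℝ) : ℂ) * (b i * f.coeff (k - i))‖ :=
        norm_sum_le _ _
    _ ≤ ∑ _i ∈ Finset.Icc (k - t) k, D / ((k : ℝ) + 1) ^ α * (Mb' * Ma) := by
        apply Finset.sum_le_sum
        intro i hi
        rw [Finset.mem_Icc] at hi
        obtain ⟨h1, h2⟩ := hD i k hk hi.1 hi.2
        rw [norm_mul]
        have hnc : ‖((phi α (i : ℝ) - phi α (k : ℝ) : ℝ) : ℂ)‖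
            = |phi α (i : ℝ) - phi α (k : ℝ)| := Complex.norm_real _
        rw [hnc, abs_sub_comm, abs_of_nonneg h1]
        apply mul_le_mul h2 ?_ (norm_nonneg _) (by positivity)
        rw [norm_mul]
        exact mul_le_mul (hMb' i) (hMa (k - i)) (norm_nonneg _) (le_of_lt hMb'pos)
    _ = ((t : ℝ) + 1) * (D / ((k : ℝ) + 1) ^ α * (Mb' * Ma)) := by
        rw [Finset.sum_const, Nat.card_Icc]
        have : k + 1 - (k - t) = t + 1 := by omega
        rw [this]
        push_cast
        ring
    _ = ((t : ℝ) + 1) * D * Mb' * Ma / ((k : ℝ) + 1) ^ α := by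
        field_simp
end

section
/- (Interpolation lemma) Let α < 2, let f be an analytic, zero-free function on the unit disk with f ∈ D_α and log f ∈ D_α (for a fixed analytic branch of the logarithm). Then for every τ ∈ (0,1], D_α(f^τ) ≤ τ²(D_α(f) + D_α(log f)), where D_α(g) = ∫_𝔻 |g'(z)|² (1−|z|²)^{1−α} dA(z); in particular f^τ ∈ D_α. -/
open MeasureTheory

/-- The weighted Dirichlet integral D_α(g) = ∫_𝔻 |g'(z)|² (1−|z|²)^{1−α} dA(z). -/
noncomputable def Dint (α : ℝ) (g : ℂ → ℂ) : ℝ :=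
  ∫ z in Metric.ball (0 : ℂ) 1, ‖deriv g z‖ ^ 2 * (1 - ‖z‖ ^ 2) ^ (1 - α)

/-- Finiteness of the weighted Dirichlet integral (membership in D_α). -/
def InDF (α : ℝ) (g : ℂ → ℂ) : Prop :=
  MeasureTheory.IntegrableOn
    (fun z => ‖deriv g z‖ ^ 2 * (1 - ‖z‖ ^ 2) ^ (1 - α)) (Metric.ball (0 : ℂ) 1)

/-- Interpolation lemma: let α < 2, f analytic and zero-free on 𝔻 with
f ∈ D_α and log f = q ∈ D_α (a fixed analytic branch, exp(q) = f). Then for every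
τ ∈ (0,1], f^τ = exp(τq) satisfies D_α(f^τ) ≤ τ²(D_α(f) + D_α(log f)); in particular
f^τ ∈ D_α. -/
theorem stmt18 (α : ℝ) (hα : α < 2) (f q : ℂ → ℂ)
    (hf : AnalyticOn ℂ f (Metric.ball 0 1)) (hq : AnalyticOn ℂ q (Metric.ball 0 1))
    (hfz : ∀ z ∈ Metric.ball (0 : ℂ) 1, f z ≠ 0)
    (hlog : ∀ z ∈ Metric.ball (0 : ℂ) 1, Complex.exp (q z) = f z)
    (hfD : InDF α f) (hqD : InDF α q)
    (τ : ℝ) (hτ : τ ∈ Set.Ioc (0 : ℝ) 1) :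
    InDF α (fun z => Complex.exp ((τ : ℂ) * q z)) ∧
    Dint α (fun z => Complex.exp ((τ : ℂ) * q z)) ≤ τ ^ 2 * (Dint α f + Dint α q) := by
  obtain ⟨hτ0, hτ1⟩ := hτ
  set B : Set ℂ := Metric.ball (0 : ℂ) 1 with hB
  have hBo : IsOpen B := Metric.isOpen_ball
  set g : ℂ → ℂ := fun z => Complex.exp ((τ : ℂ) * q z) with hg
  -- analyticity
  have hq' : AnalyticOnNhd ℂ q B := (hBo.analyticOn_iff_analyticOnNhd).1 hq
  have hgA : AnalyticOnNhd ℂ g B := fun z hz =>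
    (((analyticAt_const).mul (hq' z hz)).cexp)
  -- derivative of g
  have hderivg : ∀ z ∈ B, deriv g z = (τ : ℂ) * deriv q z * Complex.exp ((τ : ℂ) * q z) := by
    intro z hz
    have hqd : DifferentiableAt ℂ q z := (hq' z hz).differentiableAt
    have hd : DifferentiableAt ℂ (fun w => (τ : ℂ) * q w) z := hqd.const_mul _
    rw [hg]
    rw [deriv_cexp hd, deriv_const_mul _ hqd]
    ring
  -- derivative of f
  have hderivf : ∀ z ∈ B, deriv f z = deriv q z * f z := by
    intro z hz
    have hqd : DifferentiableAt ℂ q z := (hq' z hz).differentiableAt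
    have heq : f =ᶠ[nhds z] fun w => Complex.exp (q w) := by
      filter_upwards [hBo.mem_nhds hz] with w hw using (hlog w hw).symm
    rw [heq.deriv_eq, deriv_cexp hqd, hlog z hz]
    ring
  -- norm computations
  have hnormf : ∀ z ∈ B, ‖f z‖ = Real.exp (q z).re := by
    intro z hz
    rw [← hlog z hz, Complex.norm_exp]
  have hnormg : ∀ z ∈ B, ‖Complex.exp ((τ : ℂ) * q z)‖ = ‖f z‖ ^ τ := by
    intro z hz
    rw [Complex.norm_exp, hnormf z hz, Complex.re_ofReal_mul,
      mul_comm, Real.exp_mul]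
  -- pointwise bound on norms of derivatives
  have hpt : ∀ z ∈ B, ‖deriv g z‖ ^ 2 ≤ τ ^ 2 * (‖deriv f z‖ ^ 2 + ‖deriv q z‖ ^ 2) := by
    intro z hz
    have h1 : ‖deriv g z‖ = τ * ‖deriv q z‖ * ‖f z‖ ^ τ := by
      rw [hderivg z hz, norm_mul, norm_mul, hnormg z hz, Complex.norm_real,
        Real.norm_eq_abs, abs_of_pos hτ0]
    have hr : (0 : ℝ) ≤ ‖f z‖ := norm_nonneg _
    have h2 : (‖f z‖ ^ τ) ^ 2 ≤ 1 + ‖f z‖ ^ 2 := by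
      rcases le_total (‖f z‖) 1 with hle | hge
      · have : ‖f z‖ ^ τ ≤ 1 := Real.rpow_le_one hr hle hτ0.le
        nlinarith [Real.rpow_nonneg hr τ]
      · have : ‖f z‖ ^ τ ≤ ‖f z‖ ^ (1 : ℝ) :=
          Real.rpow_le_rpow_of_exponent_le hge hτ1
        rw [Real.rpow_one] at this
        nlinarith [Real.rpow_nonneg hr τ]
    have h3 : ‖deriv f z‖ = ‖deriv q z‖ * ‖f z‖ := by
      rw [hderivf z hz, norm_mul]
    rw [h1, h3]
    have key : τ ^ 2 * ‖deriv q z‖ ^ 2 * (‖f z‖ ^ τ) ^ 2 ≤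
        τ ^ 2 * ‖deriv q z‖ ^ 2 * (1 + ‖f z‖ ^ 2) :=
      mul_le_mul_of_nonneg_left h2 (by positivity)
    nlinarith [key]
  -- weight nonneg
  have hw : ∀ z ∈ B, (0 : ℝ) ≤ (1 - ‖z‖ ^ 2) ^ (1 - α) := by
    intro z hz
    have : ‖z‖ < 1 := by simpa using mem_ball_zero_iff.1 hz
    have h0 : 0 < 1 - ‖z‖ ^ 2 := by nlinarith [norm_nonneg z]
    positivity
  -- pointwise bound on integrands
  have hptw : ∀ z ∈ B,
      ‖deriv g z‖ ^ 2 * (1 - ‖z‖ ^ 2) ^ (1 - α) ≤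
      τ ^ 2 * (‖deriv f z‖ ^ 2 * (1 - ‖z‖ ^ 2) ^ (1 - α)
        + ‖deriv q z‖ ^ 2 * (1 - ‖z‖ ^ 2) ^ (1 - α)) := by
    intro z hz
    have := mul_le_mul_of_nonneg_right (hpt z hz) (hw z hz)
    calc ‖deriv g z‖ ^ 2 * (1 - ‖z‖ ^ 2) ^ (1 - α)
        ≤ τ ^ 2 * (‖deriv f z‖ ^ 2 + ‖deriv q z‖ ^ 2) * (1 - ‖z‖ ^ 2) ^ (1 - α) := this
      _ = τ ^ 2 * (‖deriv f z‖ ^ 2 * (1 - ‖z‖ ^ 2) ^ (1 - α)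
            + ‖deriv q z‖ ^ 2 * (1 - ‖z‖ ^ 2) ^ (1 - α)) := by ring
  -- integrability of the bound
  have hbound : IntegrableOn (fun z =>
      τ ^ 2 * (‖deriv f z‖ ^ 2 * (1 - ‖z‖ ^ 2) ^ (1 - α)
        + ‖deriv q z‖ ^ 2 * (1 - ‖z‖ ^ 2) ^ (1 - α))) B := by
    exact (hfD.add hqD).const_mul _
  -- measurability of g-integrand
  have hcont : ContinuousOn (fun z => ‖deriv g z‖ ^ 2 * (1 - ‖z‖ ^ 2) ^ (1 - α)) B := by
    have h1 : ContinuousOn (deriv g) B := (hgA.deriv).continuousOn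
    have h2 : ContinuousOn (fun z : ℂ => (1 - ‖z‖ ^ 2) ^ (1 - α)) B := by
      apply ContinuousOn.rpow_const
      · exact (continuous_const.sub ((continuous_norm).pow 2)).continuousOn
      · intro z hz
        left
        have : ‖z‖ < 1 := by simpa using mem_ball_zero_iff.1 hz
        nlinarith [norm_nonneg z]
    exact ((h1.norm.pow 2)).mul h2
  have hmeas : AEStronglyMeasurable (fun z => ‖deriv g z‖ ^ 2 * (1 - ‖z‖ ^ 2) ^ (1 - α))
      (volume.restrict B) :=
    hcont.aestronglyMeasurable measurableSet_ball
  -- integrability of the g-integrand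
  have hgD : IntegrableOn (fun z => ‖deriv g z‖ ^ 2 * (1 - ‖z‖ ^ 2) ^ (1 - α)) B := by
    apply hbound.mono' hmeas
    filter_upwards [ae_restrict_mem measurableSet_ball] with z hz
    rw [Real.norm_eq_abs, abs_of_nonneg (mul_nonneg (sq_nonneg _) (hw z hz))]
    exact hptw z hz
  refine ⟨hgD, ?_⟩
  have hint : Dint α g ≤ ∫ z in B,
      τ ^ 2 * (‖deriv f z‖ ^ 2 * (1 - ‖z‖ ^ 2) ^ (1 - α)
        + ‖deriv q z‖ ^ 2 * (1 - ‖z‖ ^ 2) ^ (1 - α)) :=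
    setIntegral_mono_on hgD hbound measurableSet_ball hptw
  calc Dint α g ≤ _ := hint
    _ = τ ^ 2 * (Dint α f + Dint α q) := by
        rw [integral_const_mul, integral_add hfD hqD]; rfl
end
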